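/- arXiv:2405.04306 — 7 statements merged into one kernel-verified Lean document; each statement's English description precedes it below -/
import Mathlib

section
/- Let μ be supermodular on 2^V and π = (π₁,…,π_s) an ordered partition of V with splitting μ_π. Then for every I ⊆ V: μ_π(I) = Σ_{i=1}^s μ_π(I ∩ π_i), and μ(I) ≤ μ_π(I) ≤ μ_π*(I) ≤ μ*(I). -/
/-- A function `μ : 2^V → ℝ` is supermodular if `μ ∅ = 0` and
`μ I₁ + μ I₂ ≤ μ (I₁ ∪ I₂) + μ (I₁ ∩ I₂)` for all subsets `I₁, I₂` of `V`. -/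
def Supermodular {V : Type*} [DecidableEq V] (μ : Finset V → ℝ) : Prop :=
  μ ∅ = 0 ∧ ∀ I₁ I₂ : Finset V, μ I₁ + μ I₂ ≤ μ (I₁ ∪ I₂) + μ (I₁ ∩ I₂)

/-- The adjoint `μ*(I) = μ(V) - μ(V \ I)`. -/
def adjoint {V : Type*} [Fintype V] [DecidableEq V] (μ : Finset V → ℝ) : Finset V → ℝ :=
  fun I => μ Finset.univ - μ (Finset.univ \ I)

/-- The splitting of `μ` with respect to a filtration `F`:
`μ_π(I) = Σ_{i=1}^s (μ((I ∩ F_i) ∪ F_{i-1}) - μ(F_{i-1}))`. -/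
def splitFn {V : Type*} [DecidableEq V] (μ : Finset V → ℝ) (F : ℕ → Finset V) (s : ℕ) :
    Finset V → ℝ :=
  fun I => ∑ i ∈ Finset.range s, (μ ((I ∩ F (i + 1)) ∪ F i) - μ (F i))

/-- The filtration `F j = π 0 ∪ ⋯ ∪ π (j-1)` associated to an ordered partition `π`. -/
def filtration {V : Type*} [DecidableEq V] (π : ℕ → Finset V) : ℕ → Finset V :=
  fun j => (Finset.range j).biUnion π

/-- The splitting of `μ` with respect to the ordered partition `π = (π 0, …, π (s-1))`. -/
def splitPart {V : Type*} [DecidableEq V] (μ : Finset V → ℝ) (π : ℕ → Finset V) (s : ℕ) :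
    Finset V → ℝ :=
  splitFn μ (filtration π) s

/-- For `μ` supermodular and `π` an ordered partition of `V` with splitting `μ_π`:
`μ_π(I) = Σᵢ μ_π(I ∩ πᵢ)`, and `μ(I) ≤ μ_π(I) ≤ μ_π*(I) ≤ μ*(I)` for every `I ⊆ V`. -/
theorem splitPart_sum_and_between
    {V : Type*} [Fintype V] [DecidableEq V] [Nonempty V]
    (μ : Finset V → ℝ) (hμ : Supermodular μ)
    (s : ℕ) (π : ℕ → Finset V)
    (hdisj : ∀ i j, i < s → j < s → i ≠ j → Disjoint (π i) (π j))
    (hcover : (Finset.range s).biUnion π = Finset.univ) :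
    (∀ I : Finset V,
      splitPart μ π s I = ∑ i ∈ Finset.range s, splitPart μ π s (I ∩ π i)) ∧
    (∀ I : Finset V,
      μ I ≤ splitPart μ π s I ∧
      splitPart μ π s I ≤ adjoint (splitPart μ π s) I ∧
      adjoint (splitPart μ π s) I ≤ adjoint μ I) := by

  obtain ⟨hμ0, hsup⟩ := hμ
  have hF0 : filtration π 0 = ∅ := by simp [filtration]
  have hFs : filtration π s = Finset.univ := hcover
  have hFsucc : ∀ i, filtration π (i + 1) = π i ∪ filtration π i := by
    intro i; simp [filtration, Finset.range_add_one]
  have hmono : ∀ i, filtration π i ⊆ filtration π (i + 1) := by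
    intro i; rw [hFsucc]; exact Finset.subset_union_right
  have hterm : ∀ (I : Finset V) (i : ℕ),
      (I ∩ filtration π (i + 1)) ∪ filtration π i = (I ∩ π i) ∪ filtration π i := by
    intro I i
    rw [hFsucc]
    ext x
    simp only [Finset.mem_union, Finset.mem_inter]
    tauto
  have hsingle : ∀ I : Finset V, ∀ j, j < s →
      splitPart μ π s (I ∩ π j) = μ ((I ∩ π j) ∪ filtration π j) - μ (filtration π j) := by
    intro I j hj
    unfold splitPart splitFn
    rw [Finset.sum_eq_single j]
    · rw [hterm]
      congr 3
      ext x; simp only [Finset.mem_inter]; tauto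
    · intro i hi hij
      rw [hterm]
      have hd : Disjoint (I ∩ π j) (π i) :=
        Disjoint.mono_left Finset.inter_subset_right
          (hdisj j i hj (Finset.mem_range.mp hi) (fun h => hij h.symm))
      rw [Finset.disjoint_iff_inter_eq_empty.mp hd, Finset.empty_union]
      ring
    · intro h; exact absurd (Finset.mem_range.mpr hj) h
  have part1 : ∀ I : Finset V,
      splitPart μ π s I = ∑ i ∈ Finset.range s, splitPart μ π s (I ∩ π i) := by
    intro I
    rw [Finset.sum_congr rfl (fun j hj => hsingle I j (Finset.mem_range.mp hj))]
    unfold splitPart splitFn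
    exact Finset.sum_congr rfl (fun i _ => by rw [hterm])
  have hlow : ∀ I : Finset V, μ I ≤ splitPart μ π s I := by
    intro I
    have key : ∀ i, μ (I ∩ filtration π (i + 1)) - μ (I ∩ filtration π i)
        ≤ μ ((I ∩ filtration π (i + 1)) ∪ filtration π i) - μ (filtration π i) := by
      intro i
      have h := hsup (I ∩ filtration π (i + 1)) (filtration π i)
      have hinter : (I ∩ filtration π (i + 1)) ∩ filtration π i = I ∩ filtration π i := by
        ext x
        simp only [Finset.mem_inter]
        exact ⟨fun ⟨⟨h1, _⟩, h2⟩ => ⟨h1, h2⟩, fun ⟨h1, h2⟩ => ⟨⟨h1, hmono i h2⟩, h2⟩⟩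
      rw [hinter] at h
      linarith
    have tele := Finset.sum_range_sub (fun i => μ (I ∩ filtration π i)) s
    have hμI : μ I = ∑ i ∈ Finset.range s,
        (μ (I ∩ filtration π (i + 1)) - μ (I ∩ filtration π i)) := by
      rw [tele, hFs, hF0, Finset.inter_univ, Finset.inter_empty, hμ0]; ring
    rw [hμI]
    exact Finset.sum_le_sum (fun i _ => key i)
  have hV : splitPart μ π s Finset.univ = μ Finset.univ := by
    unfold splitPart splitFn
    rw [Finset.sum_congr rfl (g := fun i => μ (filtration π (i + 1)) - μ (filtration π i))
      (fun i _ => by rw [Finset.univ_inter, Finset.union_eq_left.mpr (hmono i)])]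
    rw [Finset.sum_range_sub (fun i => μ (filtration π i)) s, hFs, hF0, hμ0]; ring
  have hsub : ∀ I : Finset V,
      splitPart μ π s I + splitPart μ π s (Finset.univ \ I) ≤ μ Finset.univ := by
    intro I
    have key : ∀ i,
        (μ ((I ∩ filtration π (i + 1)) ∪ filtration π i) - μ (filtration π i)) +
        (μ (((Finset.univ \ I) ∩ filtration π (i + 1)) ∪ filtration π i) - μ (filtration π i))
        ≤ μ (filtration π (i + 1)) - μ (filtration π i) := by
      intro i
      have h := hsup ((I ∩ filtration π (i + 1)) ∪ filtration π i)
        (((Finset.univ \ I) ∩ filtration π (i + 1)) ∪ filtration π i)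
      have hm : ∀ x, x ∈ filtration π i → x ∈ filtration π (i + 1) := fun x hx => hmono i hx
      have hun : ((I ∩ filtration π (i + 1)) ∪ filtration π i) ∪
          (((Finset.univ \ I) ∩ filtration π (i + 1)) ∪ filtration π i)
          = filtration π (i + 1) := by
        ext x
        have := hm x
        simp only [Finset.mem_union, Finset.mem_inter, Finset.mem_sdiff, Finset.mem_univ,
          true_and]
        tauto
      have hint : ((I ∩ filtration π (i + 1)) ∪ filtration π i) ∩
          (((Finset.univ \ I) ∩ filtration π (i + 1)) ∪ filtration π i)
          = filtration π i := by
        ext x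
        simp only [Finset.mem_union, Finset.mem_inter, Finset.mem_sdiff, Finset.mem_univ,
          true_and]
        tauto
      rw [hun, hint] at h
      linarith
    have hsum : splitPart μ π s I + splitPart μ π s (Finset.univ \ I)
        = ∑ i ∈ Finset.range s,
          ((μ ((I ∩ filtration π (i + 1)) ∪ filtration π i) - μ (filtration π i)) +
           (μ (((Finset.univ \ I) ∩ filtration π (i + 1)) ∪ filtration π i)
             - μ (filtration π i))) := by
      unfold splitPart splitFn
      rw [Finset.sum_add_distrib]
    rw [hsum]
    calc ∑ i ∈ Finset.range s,
          ((μ ((I ∩ filtration π (i + 1)) ∪ filtration π i) - μ (filtration π i)) +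
           (μ (((Finset.univ \ I) ∩ filtration π (i + 1)) ∪ filtration π i)
             - μ (filtration π i)))
        ≤ ∑ i ∈ Finset.range s, (μ (filtration π (i + 1)) - μ (filtration π i)) :=
          Finset.sum_le_sum (fun i _ => key i)
      _ = μ Finset.univ := by rw [Finset.sum_range_sub (fun i => μ (filtration π i)) s, hFs, hF0, hμ0]; ring
  refine ⟨part1, fun I => ⟨hlow I, ?_, ?_⟩⟩
  · unfold adjoint
    rw [hV]
    have := hsub I
    linarith
  · unfold adjoint
    rw [hV]
    have := hlow (Finset.univ \ I)
    linarith
end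

section
/- Let μ be supermodular on 2^V and π = (π₁,…,π_s) an ordered partition of V. The following are equivalent: (1) μ = μ_π; (2) μ(V) = μ(π₁)+⋯+μ(π_s); (3) μ(I) = Σ_i μ(I∩π_i) for every I ⊆ V. -/
lemma filtration_zero {V : Type*} [DecidableEq V] (π : ℕ → Finset V) :
    filtration π 0 = ∅ := by simp [filtration]

lemma filtration_succ {V : Type*} [DecidableEq V] (π : ℕ → Finset V) (j : ℕ) :
    filtration π (j + 1) = π j ∪ filtration π j := by
  simp [filtration, Finset.range_add_one]

lemma subset_filtration {V : Type*} [DecidableEq V] (π : ℕ → Finset V) {k j : ℕ}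
    (h : k < j) : π k ⊆ filtration π j :=
  Finset.subset_biUnion_of_mem π (Finset.mem_range.mpr h)

lemma superadd {V : Type*} [DecidableEq V] {μ : Finset V → ℝ} (hμ : Supermodular μ)
    {A B : Finset V} (h : Disjoint A B) : μ A + μ B ≤ μ (A ∪ B) := by
  have h2 := hμ.2 A B
  rw [Finset.disjoint_iff_inter_eq_empty] at h
  rw [h, hμ.1] at h2
  linarith

lemma keyLemma {V : Type*} [DecidableEq V] {μ : Finset V → ℝ} (hμ : Supermodular μ)
    {A B A' B' : Finset V} (hAB : Disjoint A B) (hA : A' ⊆ A) (hB : B' ⊆ B)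
    (heq : μ (A ∪ B) = μ A + μ B) : μ (A' ∪ B') = μ A' + μ B' := by
  have hd : ∀ x ∈ A, x ∉ B := fun x hx => Finset.disjoint_left.mp hAB hx
  have hA' : ∀ x ∈ A', x ∈ A := fun x hx => hA hx
  have hB' : ∀ x ∈ B', x ∈ B := fun x hx => hB hx
  have h1 := hμ.2 (A' ∪ B') A
  have h2 := hμ.2 (A ∪ B') B
  have e1 : (A' ∪ B') ∪ A = A ∪ B' := by
    ext x; simp only [Finset.mem_union, Finset.mem_inter]
    constructor
    · rintro ((h|h)|h) <;> [exact Or.inl (hA' _ h); exact Or.inr h; exact Or.inl h]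
    · rintro (h|h) <;> [exact Or.inr h; exact Or.inl (Or.inr h)]
  have e2 : (A' ∪ B') ∩ A = A' := by
    ext x; simp only [Finset.mem_union, Finset.mem_inter]
    constructor
    · rintro ⟨h|h, h2⟩
      · exact h
      · exact absurd (hB' _ h) (hd _ h2)
    · intro h; exact ⟨Or.inl h, hA' _ h⟩
  have e3 : (A ∪ B') ∪ B = A ∪ B := by
    ext x; simp only [Finset.mem_union]
    constructor
    · rintro ((h|h)|h) <;> [exact Or.inl h; exact Or.inr (hB' _ h); exact Or.inr h]
    · rintro (h|h) <;> [exact Or.inl (Or.inl h); exact Or.inr h]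
  have e4 : (A ∪ B') ∩ B = B' := by
    ext x; simp only [Finset.mem_union, Finset.mem_inter]
    constructor
    · rintro ⟨h|h, h2⟩
      · exact absurd h2 (hd _ h)
      · exact h
    · intro h; exact ⟨Or.inr h, hB' _ h⟩
  rw [e1, e2] at h1
  rw [e3, e4] at h2
  have hlow : μ A' + μ B' ≤ μ (A' ∪ B') :=
    superadd hμ (Finset.disjoint_left.mpr fun {x} hx hxB => hd x (hA' x hx) (hB' x hxB))
  linarith

/-- For `μ` supermodular and `π = (π 0, …, π (s-1))` an ordered partition of `V`,
the following are equivalent: (1) `μ = μ_π`; (2) `μ(V) = Σᵢ μ(πᵢ)`;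
(3) `μ(I) = Σᵢ μ(I ∩ πᵢ)` for every `I ⊆ V`. -/
theorem splitPart_eq_iff
    {V : Type*} [Fintype V] [DecidableEq V] [Nonempty V]
    (μ : Finset V → ℝ) (hμ : Supermodular μ)
    (s : ℕ) (π : ℕ → Finset V)
    (hdisj : ∀ i j, i < s → j < s → i ≠ j → Disjoint (π i) (π j))
    (hcover : (Finset.range s).biUnion π = Finset.univ) :
    ((μ = splitPart μ π s) ↔ (μ Finset.univ = ∑ i ∈ Finset.range s, μ (π i))) ∧
    ((μ = splitPart μ π s) ↔ (∀ I : Finset V, μ I = ∑ i ∈ Finset.range s, μ (I ∩ π i))) := by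
  have hFs : filtration π s = Finset.univ := hcover
  -- Disjointness of π k with filtration π j for j ≤ k < s
  have hdisjF : ∀ k j, k < s → j ≤ k → Disjoint (filtration π j) (π k) := by
    intro k j hk hjk
    unfold filtration
    rw [Finset.disjoint_biUnion_left]
    intro m hm
    have hm' := Finset.mem_range.mp hm
    exact hdisj m k (lt_of_lt_of_le (lt_of_lt_of_le hm' hjk) (le_of_lt hk)) hk
      (Nat.ne_of_lt (lt_of_lt_of_le hm' hjk))
  -- (1) → (2)
  have h12 : (μ = splitPart μ π s) → (μ Finset.univ = ∑ i ∈ Finset.range s, μ (π i)) := by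
    intro h1
    have hpart : ∀ j ∈ Finset.range s, μ (π j) = μ (filtration π (j+1)) - μ (filtration π j) := by
      intro j hj
      have hjs := Finset.mem_range.mp hj
      conv_lhs => rw [h1]
      unfold splitPart splitFn
      rw [Finset.sum_eq_single_of_mem j hj]
      · have e1 : π j ∩ filtration π (j+1) = π j :=
          Finset.inter_eq_left.mpr (subset_filtration π (Nat.lt_succ_self j))
        rw [e1, filtration_succ]
      · intro i hi hne
        have his := Finset.mem_range.mp hi
        rcases lt_or_gt_of_ne hne with hlt | hgt
        · -- i < j : π j ∩ F (i+1) = ∅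
          have hd : Disjoint (filtration π (i+1)) (π j) := hdisjF j (i+1) hjs hlt
          rw [Finset.disjoint_iff_inter_eq_empty.mp hd.symm]
          simp
        · -- i > j : π j ⊆ F i
          have hsub : π j ∩ filtration π (i+1) ⊆ filtration π i :=
            (Finset.inter_subset_left).trans (subset_filtration π hgt)
          rw [Finset.union_eq_right.mpr hsub, sub_self]
    calc μ Finset.univ = μ (filtration π s) - μ (filtration π 0) := by
          rw [hFs, filtration_zero, hμ.1]; ring
      _ = ∑ j ∈ Finset.range s, (μ (filtration π (j+1)) - μ (filtration π j)) :=
          (Finset.sum_range_sub (fun j => μ (filtration π j)) s).symm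
      _ = ∑ j ∈ Finset.range s, μ (π j) := (Finset.sum_congr rfl fun j hj => (hpart j hj).symm)
  -- (2) → (3)
  have h23 : (μ Finset.univ = ∑ i ∈ Finset.range s, μ (π i)) →
      (∀ I : Finset V, μ I = ∑ i ∈ Finset.range s, μ (I ∩ π i)) := by
    intro h2
    have hle : ∀ j ∈ Finset.range s, μ (π j) ≤ μ (filtration π (j+1)) - μ (filtration π j) := by
      intro j hj
      have hjs := Finset.mem_range.mp hj
      have := superadd hμ (hdisjF j j hjs le_rfl).symm
      rw [← filtration_succ] at this
      linarith
    have hsum : ∑ j ∈ Finset.range s, μ (π j)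
        = ∑ j ∈ Finset.range s, (μ (filtration π (j+1)) - μ (filtration π j)) := by
      rw [Finset.sum_range_sub (fun j => μ (filtration π j)) s, hFs, filtration_zero, hμ.1]
      linarith
    have hstep := (Finset.sum_eq_sum_iff_of_le hle).mp hsum
    have hadd : ∀ j, j < s → μ (filtration π (j+1)) = μ (filtration π j) + μ (π j) := by
      intro j hj
      have := hstep j (Finset.mem_range.mpr hj)
      linarith
    intro I
    have key : ∀ j, j ≤ s → μ (I ∩ filtration π j) = ∑ i ∈ Finset.range j, μ (I ∩ π i) := by
      intro j
      induction j with
      | zero => intro _; simp [filtration_zero, hμ.1]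
      | succ n ih =>
        intro hn
        have hns : n < s := hn
        have e : I ∩ filtration π (n+1) = (I ∩ filtration π n) ∪ (I ∩ π n) := by
          rw [filtration_succ, Finset.inter_union_distrib_left, Finset.union_comm]
        have heq : μ (filtration π n ∪ π n) = μ (filtration π n) + μ (π n) := by
          rw [Finset.union_comm, ← filtration_succ]; exact hadd n hns
        rw [e, keyLemma hμ (hdisjF n n hns le_rfl) Finset.inter_subset_right
          Finset.inter_subset_right heq, Finset.sum_range_succ, ih (Nat.le_of_lt hn)]
    have := key s le_rfl
    rwa [hFs, Finset.inter_univ] at this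
  -- (3) → (1)
  have h31 : (∀ I : Finset V, μ I = ∑ i ∈ Finset.range s, μ (I ∩ π i)) →
      (μ = splitPart μ π s) := by
    intro h3
    funext I
    unfold splitPart splitFn
    rw [h3 I]
    refine Finset.sum_congr rfl fun i hi => ?_
    have his := Finset.mem_range.mp hi
    rw [h3 ((I ∩ filtration π (i+1)) ∪ filtration π i), h3 (filtration π i),
      ← Finset.sum_sub_distrib, Finset.sum_eq_single_of_mem i hi]
    · -- term at i
      have e1 : ((I ∩ filtration π (i+1)) ∪ filtration π i) ∩ π i = I ∩ π i := by
        have hsub : π i ⊆ filtration π (i+1) := subset_filtration π (Nat.lt_succ_self i)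
        have hd : ∀ x ∈ filtration π i, x ∉ π i :=
          fun x hx => Finset.disjoint_left.mp (hdisjF i i his le_rfl) hx
        ext x
        simp only [Finset.mem_union, Finset.mem_inter]
        constructor
        · rintro ⟨⟨hI, _⟩ | hF, hp⟩
          · exact ⟨hI, hp⟩
          · exact absurd hp (hd x hF)
        · rintro ⟨hI, hp⟩; exact ⟨Or.inl ⟨hI, hsub hp⟩, hp⟩
      have e2 : filtration π i ∩ π i = ∅ :=
        Finset.disjoint_iff_inter_eq_empty.mp (hdisjF i i his le_rfl)
      rw [e1, e2, hμ.1]; ring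
    · intro k hk hne
      have hks := Finset.mem_range.mp hk
      rcases lt_or_gt_of_ne hne with hlt | hgt
      · -- k < i : both intersections equal π k
        have hsub : π k ⊆ filtration π i := subset_filtration π hlt
        have e1 : ((I ∩ filtration π (i+1)) ∪ filtration π i) ∩ π k = π k :=
          Finset.inter_eq_right.mpr (hsub.trans Finset.subset_union_right)
        have e2 : filtration π i ∩ π k = π k := Finset.inter_eq_right.mpr hsub
        rw [e1, e2, sub_self]
      · -- k > i: both intersections empty
        have hd1 : Disjoint (filtration π (i+1)) (π k) := hdisjF k (i+1) hks hgt
        have hd2 : Disjoint (filtration π i) (π k) := hdisjF k i hks (Nat.le_of_lt hgt)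
        have e1 : ((I ∩ filtration π (i+1)) ∪ filtration π i) ∩ π k = ∅ := by
          rw [← Finset.disjoint_iff_inter_eq_empty]
          exact Finset.disjoint_union_left.mpr ⟨Disjoint.mono_left Finset.inter_subset_right hd1, hd2⟩
        have e2 : filtration π i ∩ π k = ∅ := Finset.disjoint_iff_inter_eq_empty.mp hd2
        rw [e1, e2, sub_self]
  exact ⟨⟨h12, fun h2 => h31 (h23 h2)⟩, ⟨fun h1 => h23 (h12 h1), h31⟩⟩
end

section
/- Let μ be supermodular on 2^V, let π, π' be ordered partitions of V, and let π'' be the refinement of π induced by π' (whose parts are the intersections π'_j ∩ π_i, ordered first by i then by j). Then (μ_π)_{π'} = μ_{π''}. -/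
lemma sum_range_mul' {M : Type*} [AddCommMonoid M] (f : ℕ → M) (s l : ℕ) :
    ∑ k ∈ Finset.range (s * l), f k = ∑ i ∈ Finset.range s, ∑ j ∈ Finset.range l, f (j + i * l) := by
  induction s with
  | zero => simp
  | succ n ih =>
      rw [Nat.succ_mul, Finset.sum_range_add, ih, Finset.sum_range_succ]
      simp [add_comm]

/-- Splittings compose: `(μ_π)_{π'} = μ_{π''}` where `π''` is the refinement of `π`
induced by `π'`, whose parts are the `π'_j ∩ π_i` ordered first by `i`, then by `j`.
Here ordered partitions are encoded by their associated filtrations `F` (of length `s`,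
for `π`) and `F'` (of length `l`, for `π'`); the filtration of `π''` has length `s·l`
and its `k`-th term is `F (k/l) ∪ (F (k/l + 1) ∩ F' (k % l))`. -/
theorem splitFn_splitFn_eq_refinement
    {V : Type*} [Fintype V] [DecidableEq V] [Nonempty V]
    (μ : Finset V → ℝ) (hμ : Supermodular μ)
    (s l : ℕ) (hl : 0 < l)
    (F F' : ℕ → Finset V)
    (hF0 : F 0 = ∅) (hFs : F s = Finset.univ) (hFmono : Monotone F)
    (hF'0 : F' 0 = ∅) (hF'l : F' l = Finset.univ) (hF'mono : Monotone F') :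
    splitFn (splitFn μ F s) F' l =
      splitFn μ (fun k => F (k / l) ∪ (F (k / l + 1) ∩ F' (k % l))) (s * l) := by
  funext I
  simp only [splitFn]
  rw [sum_range_mul', Finset.sum_comm]
  refine Finset.sum_congr rfl fun j hj => ?_
  rw [← Finset.sum_sub_distrib]
  refine Finset.sum_congr rfl fun i hi => ?_
  rw [Finset.mem_range] at hj hi
  have h1 : (j + i * l) / l = i := by
    rw [Nat.add_mul_div_right _ _ hl, Nat.div_eq_of_lt hj, Nat.zero_add]
  have h2 : (j + i * l) % l = j := by
    rw [Nat.add_mul_mod_self_right, Nat.mod_eq_of_lt hj]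
  rcases eq_or_lt_of_le (Nat.succ_le_of_lt hj) with hle | hlt
  · -- j + 1 = l
    have hk : j + i * l + 1 = (i + 1) * l := by
      rw [show j + i * l + 1 = (j + 1) + i * l by ring, show j + 1 = l from hle]; ring
    have h3 : (j + i * l + 1) / l = i + 1 := by rw [hk, Nat.mul_div_cancel _ hl]
    have h4 : (j + i * l + 1) % l = 0 := by rw [hk, Nat.mul_mod_left]
    have hFl' : F' (j + 1) = Finset.univ := by
      rw [show j + 1 = l from hle, hF'l]
    simp only [h1, h2, h3, h4, hF'0, Finset.inter_empty, Finset.union_empty]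
    have hA : ((I ∩ F' (j + 1)) ∪ F' j) ∩ F (i + 1) ∪ F i =
        (I ∩ F (i + 1)) ∪ (F i ∪ (F (i + 1) ∩ F' j)) := by
      rw [hFl', Finset.inter_univ]
      ext x; simp only [Finset.mem_union, Finset.mem_inter]; tauto
    have hB : (F' j ∩ F (i + 1)) ∪ F i = F i ∪ (F (i + 1) ∩ F' j) := by
      ext x; simp only [Finset.mem_union, Finset.mem_inter]; tauto
    rw [hA, hB]; ring
  · -- j + 1 < l
    have h3 : (j + i * l + 1) / l = i := by
      have : j + i * l + 1 = (j + 1) + i * l := by ring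
      rw [this, Nat.add_mul_div_right _ _ hl, Nat.div_eq_of_lt hlt, Nat.zero_add]
    have h4 : (j + i * l + 1) % l = j + 1 := by
      have : j + i * l + 1 = (j + 1) + i * l := by ring
      rw [this, Nat.add_mul_mod_self_right, Nat.mod_eq_of_lt hlt]
    simp only [h1, h2, h3, h4]
    have hA : ((I ∩ F' (j + 1)) ∪ F' j) ∩ F (i + 1) ∪ F i =
        (I ∩ (F i ∪ (F (i + 1) ∩ F' (j + 1)))) ∪ (F i ∪ (F (i + 1) ∩ F' j)) := by
      ext x; simp only [Finset.mem_union, Finset.mem_inter]; tauto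
    have hB : (F' j ∩ F (i + 1)) ∪ F i = F i ∪ (F (i + 1) ∩ F' j) := by
      ext x; simp only [Finset.mem_union, Finset.mem_inter]; tauto
    rw [hA, hB]; ring
end

section
/- Let μ be supermodular on 2^V, π = (π₁,…,π_s) an ordered partition with filtration F_•, and μ_π its splitting. Then P_{μ_π} = P_μ ∩ { q ∈ ℝ^V : q(F_j) = μ(F_j) for j = 1,…,s−1 }. -/
/-- The base polytope `P_μ = { q ∈ ℝ^V | μ(I) ≤ q(I) ≤ μ*(I) for all I ⊆ V }`,
where `q(I) = Σ_{v ∈ I} q v`. -/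
def basePoly {V : Type*} [Fintype V] [DecidableEq V] (μ : Finset V → ℝ) : Set (V → ℝ) :=
  {q | ∀ I : Finset V, μ I ≤ ∑ v ∈ I, q v ∧ ∑ v ∈ I, q v ≤ adjoint μ I}

section Aux
variable {V : Type*} [Fintype V] [DecidableEq V]

lemma chainF (F : ℕ → Finset V) (s : ℕ) (hmono : ∀ i, i < s → F i ⊆ F (i + 1)) :
    ∀ i j, i ≤ j → j ≤ s → F i ⊆ F j := by
  intro i j hij hjs
  induction j, hij using Nat.le_induction with
  | base => exact subset_rfl
  | succ n hn ih => exact (ih (by omega)).trans (hmono n (by omega))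

lemma ite_tel (μ : Finset V → ℝ) (F : ℕ → Finset V) (s j : ℕ) (hjs : j ≤ s) :
    ∑ i ∈ Finset.range s, (if i < j then μ (F (i + 1)) - μ (F i) else 0)
      = μ (F j) - μ (F 0) := by
  rw [← Finset.sum_subset (Finset.range_subset_range.mpr hjs)
    (by intro x hx hx'
        simp only [Finset.mem_range] at hx hx'
        rw [if_neg (by omega)])]
  rw [Finset.sum_congr rfl (fun i hi => if_pos (Finset.mem_range.mp hi)),
    Finset.sum_range_sub (fun i => μ (F i))]

lemma splitFn_F (μ : Finset V → ℝ) (F : ℕ → Finset V) (s : ℕ)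
    (hmono : ∀ i, i < s → F i ⊆ F (i + 1)) (j : ℕ) (hjs : j ≤ s) :
    splitFn μ F s (F j) = μ (F j) - μ (F 0) := by
  have hc := chainF F s hmono
  rw [← ite_tel μ F s j hjs]
  unfold splitFn
  refine Finset.sum_congr rfl (fun i hi => ?_)
  simp only [Finset.mem_range] at hi
  by_cases h : i < j
  · rw [if_pos h, Finset.inter_eq_right.mpr (hc (i + 1) j h hjs),
      Finset.union_eq_left.mpr (hmono i hi)]
  · have hji : F j ⊆ F i := hc j i (by omega) (by omega)
    rw [if_neg h, Finset.inter_eq_left.mpr (hji.trans (hmono i hi)),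
      Finset.union_eq_right.mpr hji]
    ring

lemma splitFn_compl_F (μ : Finset V → ℝ) (F : ℕ → Finset V) (s : ℕ)
    (hmono : ∀ i, i < s → F i ⊆ F (i + 1)) (j : ℕ) (hjs : j ≤ s) :
    splitFn μ F s (Finset.univ \ F j) = μ (F s) - μ (F j) := by
  have hc := chainF F s hmono
  have key : ∀ i ∈ Finset.range s,
      μ ((Finset.univ \ F j ∩ F (i + 1)) ∪ F i) - μ (F i)
        = (μ (F (i + 1)) - μ (F i)) - (if i < j then μ (F (i + 1)) - μ (F i) else 0) := by
    intro i hi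
    simp only [Finset.mem_range] at hi
    by_cases h : i < j
    · have h1 : F (i + 1) ⊆ F j := hc (i + 1) j h hjs
      have : Finset.univ \ F j ∩ F (i + 1) = ∅ := by
        ext x; simp only [Finset.mem_inter, Finset.mem_sdiff, Finset.mem_univ, true_and,
          Finset.notMem_empty, iff_false, not_and]
        intro hx hx'; exact hx (h1 hx')
      rw [if_pos h, this, Finset.empty_union]
      ring
    · have hji : F j ⊆ F i := hc j i (by omega) (by omega)
      have : Finset.univ \ F j ∩ F (i + 1) ∪ F i = F (i + 1) := by
        ext x
        simp only [Finset.mem_union, Finset.mem_inter, Finset.mem_sdiff, Finset.mem_univ,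
          true_and]
        constructor
        · rintro (⟨_, hx⟩ | hx)
          · exact hx
          · exact hmono i hi hx
        · intro hx
          by_cases hxi : x ∈ F i
          · exact Or.inr hxi
          · exact Or.inl ⟨fun hxj => hxi (hji hxj), hx⟩
      rw [if_neg h, this]
      ring
  unfold splitFn
  rw [Finset.sum_congr rfl key, Finset.sum_sub_distrib,
    Finset.sum_range_sub (fun i => μ (F i)), ite_tel μ F s j hjs]
  ring

lemma le_splitFn (μ : Finset V → ℝ) (hμ : Supermodular μ) (F : ℕ → Finset V) (s : ℕ)
    (hF0 : F 0 = ∅) (hFs : F s = Finset.univ)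
    (hmono : ∀ i, i < s → F i ⊆ F (i + 1)) (I : Finset V) :
    μ I ≤ splitFn μ F s I := by
  have key : ∀ j, j ≤ s →
      μ (I ∩ F j) ≤ ∑ i ∈ Finset.range j, (μ ((I ∩ F (i + 1)) ∪ F i) - μ (F i)) := by
    intro j
    induction j with
    | zero => intro _; simp [hF0, hμ.1]
    | succ n ih =>
      intro hns
      have h1 := ih (by omega)
      have h2 := hμ.2 (I ∩ F (n + 1)) (F n)
      have h3 : I ∩ F (n + 1) ∩ F n = I ∩ F n := by
        rw [Finset.inter_assoc, Finset.inter_eq_right.mpr (hmono n (by omega))]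
      rw [h3] at h2
      rw [Finset.sum_range_succ]
      linarith
  have := key s le_rfl
  rwa [hFs, Finset.inter_univ] at this

lemma splitFn_le (μ : Finset V → ℝ) (F : ℕ → Finset V) (s : ℕ)
    (hF0 : F 0 = ∅) (hFs : F s = Finset.univ)
    (hmono : ∀ i, i < s → F i ⊆ F (i + 1)) (q : V → ℝ)
    (hq : ∀ J : Finset V, μ J ≤ ∑ v ∈ J, q v)
    (hqF : ∀ j, j ≤ s → ∑ v ∈ F j, q v = μ (F j)) (I : Finset V) :
    splitFn μ F s I ≤ ∑ v ∈ I, q v := by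
  have step : ∀ i, i < s →
      μ ((I ∩ F (i + 1)) ∪ F i) - μ (F i)
        ≤ ∑ v ∈ I ∩ F (i + 1), q v - ∑ v ∈ I ∩ F i, q v := by
    intro i hi
    have h1 : μ ((I ∩ F (i + 1)) ∪ F i) ≤ ∑ v ∈ (I ∩ F (i + 1)) ∪ F i, q v := hq _
    have h2 : ∑ v ∈ (I ∩ F (i + 1)) ∪ F i, q v - ∑ v ∈ F i, q v
        = ∑ v ∈ ((I ∩ F (i + 1)) ∪ F i) \ F i, q v :=
      (Finset.sum_sdiff_eq_sub Finset.subset_union_right).symm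
    have h3 : ((I ∩ F (i + 1)) ∪ F i) \ F i = (I ∩ F (i + 1)) \ (I ∩ F i) := by
      ext x
      simp only [Finset.mem_sdiff, Finset.mem_union, Finset.mem_inter]
      constructor
      · rintro ⟨hx | hx, hx'⟩
        · exact ⟨hx, fun h => hx' h.2⟩
        · exact absurd hx hx'
      · rintro ⟨⟨hxI, hx1⟩, hx2⟩
        exact ⟨Or.inl ⟨hxI, hx1⟩, fun h => hx2 ⟨hxI, h⟩⟩
    have h4 : ∑ v ∈ (I ∩ F (i + 1)) \ (I ∩ F i), q v
        = ∑ v ∈ I ∩ F (i + 1), q v - ∑ v ∈ I ∩ F i, q v :=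
      Finset.sum_sdiff_eq_sub (Finset.inter_subset_inter subset_rfl (hmono i hi))
    have h5 := hqF i (by omega)
    rw [h3, h4] at h2; linarith
  calc splitFn μ F s I
      ≤ ∑ i ∈ Finset.range s, (∑ v ∈ I ∩ F (i + 1), q v - ∑ v ∈ I ∩ F i, q v) := by
        unfold splitFn
        exact Finset.sum_le_sum (fun i hi => step i (Finset.mem_range.mp hi))
    _ = ∑ v ∈ I ∩ F s, q v - ∑ v ∈ I ∩ F 0, q v :=
        Finset.sum_range_sub (fun i => ∑ v ∈ I ∩ F i, q v) s
    _ = ∑ v ∈ I, q v := by rw [hFs, hF0]; simp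

end Aux

/-- For `μ` supermodular and an ordered partition with filtration `F` of length `s`,
`P_{μ_π} = P_μ ∩ { q | q(F_j) = μ(F_j) for j = 1, …, s-1 }`. -/
theorem basePoly_splitFn
    {V : Type*} [Fintype V] [DecidableEq V] [Nonempty V]
    (μ : Finset V → ℝ) (hμ : Supermodular μ)
    (s : ℕ) (F : ℕ → Finset V)
    (hF0 : F 0 = ∅) (hFs : F s = Finset.univ)
    (hmono : ∀ i, i < s → F i ⊆ F (i + 1)) :
    basePoly (splitFn μ F s) =
      basePoly μ ∩ {q | ∀ j, 0 < j → j < s → ∑ v ∈ F j, q v = μ (F j)} := by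
  have hB := le_splitFn μ hμ F s hF0 hFs hmono
  have hsU : splitFn μ F s Finset.univ = μ Finset.univ := by
    have := splitFn_F μ F s hmono s le_rfl
    rw [hFs, hF0, hμ.1] at this
    linarith
  ext q
  constructor
  · intro hq
    have hadj : ∀ I : Finset V, adjoint (splitFn μ F s) I ≤ adjoint μ I := by
      intro I
      unfold adjoint
      rw [hsU]
      linarith [hB (Finset.univ \ I)]
    refine ⟨fun I => ⟨(hB I).trans (hq I).1, (hq I).2.trans (hadj I)⟩, ?_⟩
    intro j hj0 hjs
    have h1 := (hq (F j)).1
    have h2 := (hq (F j)).2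
    have h3 := splitFn_F μ F s hmono j (by omega)
    rw [hF0, hμ.1] at h3
    have h4 : adjoint (splitFn μ F s) (F j) = μ (F j) := by
      unfold adjoint
      rw [hsU, splitFn_compl_F μ F s hmono j (by omega), hFs]
      ring
    rw [h4] at h2
    linarith
  · rintro ⟨hq, heq⟩
    have hU : ∑ v ∈ (Finset.univ : Finset V), q v = μ Finset.univ := by
      have h1 := (hq Finset.univ).1
      have h2 := (hq Finset.univ).2
      unfold adjoint at h2
      rw [Finset.sdiff_self, hμ.1] at h2
      linarith
    have hqF : ∀ j, j ≤ s → ∑ v ∈ F j, q v = μ (F j) := by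
      intro j hjs
      rcases Nat.eq_zero_or_pos j with h | h
      · rw [h, hF0]; simp [hμ.1]
      · rcases eq_or_lt_of_le hjs with h' | h'
        · rw [h', hFs]; exact hU
        · exact heq j h h'
    have hC := splitFn_le μ F s hF0 hFs hmono q (fun J => (hq J).1) hqF
    intro I
    refine ⟨hC I, ?_⟩
    unfold adjoint
    rw [hsU]
    have h1 := hC (Finset.univ \ I)
    have h2 : ∑ v ∈ Finset.univ \ I, q v
        = ∑ v ∈ (Finset.univ : Finset V), q v - ∑ v ∈ I, q v :=
      Finset.sum_sdiff_eq_sub (Finset.subset_univ I)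
    rw [hU] at h2
    linarith
end

section
/- Let D be a G-admissible divisor of degree d on a metric graph Γ with model (G,ℓ). The function μ_D*(I) := deg(D_I) + e(I,I^c)/2 on subsets I ⊆ V is submodular, and together with μ_D(I) := deg(D^I) + e(I,I^c)/2 (where D^I = D_I minus one chip for each edge of G_D crossing from I to I^c) it forms an adjoint modular pair: μ_D(I) + μ_D*(I^c) = d for all I. -/
/-- A model `(G, ℓ)` of a metric graph `Γ`: a finite (multi)graph `G = (V, E)` given by
its endpoint maps `src, tgt : E → V`, together with positive edge lengths `ℓ : E → ℝ`.
The metric graph `Γ` is obtained by plugging an interval `[0, ℓ e]` between the two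
extremities of each edge `e`; a point of `Γ` is either a vertex or an interior point of
an edge `e`, recorded by its parameter `t ∈ (0, ℓ e)`. -/
structure MetricGraph where
  V : Type
  E : Type
  fintypeV : Fintype V
  decEqV : DecidableEq V
  fintypeE : Fintype E
  src : E → V
  tgt : E → V
  len : E → ℝ
  len_pos : ∀ e, 0 < len e

attribute [instance] MetricGraph.fintypeV MetricGraph.decEqV MetricGraph.fintypeE

/-- A divisor on the metric graph `Γ`: an integer coefficient `vtx v` at each vertex `v`,
and an integer coefficient `inter e t` at the interior point of edge `e` with parameter
`t`; the interior coefficients are supported on finitely many points, all lying in the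
open interval `(0, ℓ e)`. -/
structure Divisor (Γ : MetricGraph) where
  vtx : Γ.V → ℤ
  inter : Γ.E → ℝ → ℤ
  finite_supp : ∀ e, {t : ℝ | inter e t ≠ 0}.Finite
  supp_mem : ∀ e t, inter e t ≠ 0 → t ∈ Set.Ioo 0 (Γ.len e)

/-- A divisor `D` is `G`-admissible if each edge interior contains at most one point of
its support, and the coefficient of `D` there equals `1`. -/
def Divisor.GAdmissible {Γ : MetricGraph} (D : Divisor Γ) : Prop :=
  ∀ e t₁ t₂, D.inter e t₁ ≠ 0 → D.inter e t₂ ≠ 0 → t₁ = t₂ ∧ D.inter e t₁ = 1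

/-- The total interior degree of `D` on the edge `e`. -/
noncomputable def Divisor.interDeg {Γ : MetricGraph} (D : Divisor Γ) (e : Γ.E) : ℤ :=
  ∑ᶠ t : ℝ, D.inter e t

/-- The degree of the divisor `D`. -/
noncomputable def Divisor.deg {Γ : MetricGraph} (D : Divisor Γ) : ℤ :=
  (∑ v, D.vtx v) + ∑ e, D.interDeg e

open Finset in
/-- `deg(D_I)`: the degree of the restriction of `D` to `Γ_I`, the union of the vertices
in `I` and the edges joining two vertices of `I`. -/
noncomputable def Divisor.degRestr {Γ : MetricGraph} (D : Divisor Γ) (I : Finset Γ.V) : ℤ :=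
  (∑ v ∈ I, D.vtx v) +
    ∑ e ∈ Finset.univ.filter (fun e => Γ.src e ∈ I ∧ Γ.tgt e ∈ I), D.interDeg e

/-- `e(I, I^c)`: the number of edges of `G` between `I` and its complement. -/
noncomputable def crossE (Γ : MetricGraph) (I : Finset Γ.V) : ℕ :=
  {e : Γ.E | ¬((Γ.src e ∈ I) ↔ (Γ.tgt e ∈ I))}.ncard

/-- `e_D(I, I^c)`: the number of edges of the spanning subgraph `G_D` (edges with no
point of the support of `D` in their interior) between `I` and its complement. -/
noncomputable def crossED {Γ : MetricGraph} (D : Divisor Γ) (I : Finset Γ.V) : ℕ :=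
  {e : Γ.E | (¬((Γ.src e ∈ I) ↔ (Γ.tgt e ∈ I))) ∧ ∀ t, D.inter e t = 0}.ncard

/-- `μ_D*(I) = deg(D_I) + e(I, I^c)/2`. -/
noncomputable def muStar {Γ : MetricGraph} (D : Divisor Γ) (I : Finset Γ.V) : ℝ :=
  (D.degRestr I : ℝ) + (crossE Γ I : ℝ) / 2

/-- `μ_D(I) = deg(D^I) + e(I, I^c)/2`, where `D^I` is `D_I` minus one chip for each edge
of `G_D` crossing from `I` to `I^c`, so that `deg(D^I) = deg(D_I) - e_D(I, I^c)`. -/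
noncomputable def muLow {Γ : MetricGraph} (D : Divisor Γ) (I : Finset Γ.V) : ℝ :=
  ((D.degRestr I : ℝ) - (crossED D I : ℝ)) + (crossE Γ I : ℝ) / 2

section Aux
open Finset

open scoped Classical in
lemma interDeg_eq {Γ : MetricGraph} (D : Divisor Γ) (hD : D.GAdmissible) (e : Γ.E) :
    D.interDeg e = if ∀ t, D.inter e t = 0 then 0 else 1 := by
  split_ifs with h
  · simp [Divisor.interDeg, h]
  · push_neg at h
    obtain ⟨t0, ht0⟩ := h
    have h1 : ∑ᶠ t, D.inter e t = D.inter e t0 := by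
      apply finsum_eq_single
      intro x hx
      by_contra hx0
      exact hx ((hD e x t0 hx0 ht0).1)
    rw [Divisor.interDeg, h1, (hD e t0 t0 ht0 ht0).2]

lemma ncard_setOf_eq_sum {α : Type} [Fintype α] (p : α → Prop) [DecidablePred p] :
    ({a : α | p a}.ncard : ℝ) = ∑ a : α, (if p a then (1:ℝ) else 0) := by
  rw [show {a : α | p a} = ↑(univ.filter p) from by ext; simp,
    Set.ncard_coe_finset, card_filter]
  push_cast [apply_ite (Nat.cast : ℕ → ℝ)]
  rfl

open scoped Classical in
noncomputable def edgeF {Γ : MetricGraph} (D : Divisor Γ) (I : Finset Γ.V) (e : Γ.E) : ℝ :=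
  (if Γ.src e ∈ I ∧ Γ.tgt e ∈ I then (D.interDeg e : ℝ) else 0) +
    (if ¬((Γ.src e ∈ I) ↔ (Γ.tgt e ∈ I)) then (1:ℝ) else 0) / 2

open scoped Classical in
noncomputable def edgeG {Γ : MetricGraph} (D : Divisor Γ) (I : Finset Γ.V) (e : Γ.E) : ℝ :=
  edgeF D I e - (if (¬((Γ.src e ∈ I) ↔ (Γ.tgt e ∈ I))) ∧ ∀ t, D.inter e t = 0 then (1:ℝ) else 0)

open scoped Classical in
lemma muStar_eq {Γ : MetricGraph} (D : Divisor Γ) (I : Finset Γ.V) :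
    muStar D I = (∑ v ∈ I, (D.vtx v : ℝ)) + ∑ e, edgeF D I e := by
  rw [muStar, Divisor.degRestr, crossE, ncard_setOf_eq_sum]
  push_cast
  rw [sum_filter]
  have h2 : ∑ e, edgeF D I e
      = (∑ e, if Γ.src e ∈ I ∧ Γ.tgt e ∈ I then (D.interDeg e : ℝ) else 0)
        + ∑ e, (if ¬((Γ.src e ∈ I) ↔ (Γ.tgt e ∈ I)) then (1:ℝ) else 0) / 2 := by
    rw [← Finset.sum_add_distrib]
    rfl
  rw [h2, Finset.sum_div, add_assoc]

open scoped Classical in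
lemma muLow_eq {Γ : MetricGraph} (D : Divisor Γ) (I : Finset Γ.V) :
    muLow D I = (∑ v ∈ I, (D.vtx v : ℝ)) + ∑ e, edgeG D I e := by
  have h1 : muLow D I = muStar D I - (crossED D I : ℝ) := by
    rw [muLow, muStar]; ring
  rw [h1, muStar_eq, crossED, ncard_setOf_eq_sum]
  have h2 : ∑ e, edgeG D I e
      = (∑ e, edgeF D I e)
        - ∑ e, (if (¬((Γ.src e ∈ I) ↔ (Γ.tgt e ∈ I))) ∧ ∀ t, D.inter e t = 0
            then (1:ℝ) else 0) := by
    rw [← Finset.sum_sub_distrib]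
    rfl
  rw [h2]
  ring

lemma edge_sub (A : ℝ) (h0 : 0 ≤ A) (h1 : A ≤ 1) (sI tI sJ tJ : Prop)
    [Decidable sI] [Decidable tI] [Decidable sJ] [Decidable tJ] :
    ((if (sI ∨ sJ) ∧ (tI ∨ tJ) then A else 0)
        + (if ¬((sI ∨ sJ) ↔ (tI ∨ tJ)) then (1:ℝ) else 0) / 2)
      + ((if (sI ∧ sJ) ∧ (tI ∧ tJ) then A else 0)
        + (if ¬((sI ∧ sJ) ↔ (tI ∧ tJ)) then (1:ℝ) else 0) / 2)
    ≤ ((if sI ∧ tI then A else 0) + (if ¬(sI ↔ tI) then (1:ℝ) else 0) / 2)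
      + ((if sJ ∧ tJ then A else 0) + (if ¬(sJ ↔ tJ) then (1:ℝ) else 0) / 2) := by
  by_cases hsI : sI <;> by_cases htI : tI <;> by_cases hsJ : sJ <;> by_cases htJ : tJ <;>
    simp [hsI, htI, hsJ, htJ] <;> linarith

lemma edge_sup (A : ℝ) (P : Prop) [Decidable P] (hA : A = if P then 0 else 1)
    (sI tI sJ tJ : Prop)
    [Decidable sI] [Decidable tI] [Decidable sJ] [Decidable tJ] :
    (((if sI ∧ tI then A else 0) + (if ¬(sI ↔ tI) then (1:ℝ) else 0) / 2)
        - (if ¬(sI ↔ tI) ∧ P then (1:ℝ) else 0))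
      + (((if sJ ∧ tJ then A else 0) + (if ¬(sJ ↔ tJ) then (1:ℝ) else 0) / 2)
        - (if ¬(sJ ↔ tJ) ∧ P then (1:ℝ) else 0))
    ≤ (((if (sI ∨ sJ) ∧ (tI ∨ tJ) then A else 0)
        + (if ¬((sI ∨ sJ) ↔ (tI ∨ tJ)) then (1:ℝ) else 0) / 2)
        - (if ¬((sI ∨ sJ) ↔ (tI ∨ tJ)) ∧ P then (1:ℝ) else 0))
      + (((if (sI ∧ sJ) ∧ (tI ∧ tJ) then A else 0)
        + (if ¬((sI ∧ sJ) ↔ (tI ∧ tJ)) then (1:ℝ) else 0) / 2)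
        - (if ¬((sI ∧ sJ) ↔ (tI ∧ tJ)) ∧ P then (1:ℝ) else 0)) := by
  by_cases hP : P <;> by_cases hsI : sI <;> by_cases htI : tI <;> by_cases hsJ : sJ <;>
    by_cases htJ : tJ <;> simp [hP, hsI, htI, hsJ, htJ, hA] <;> linarith

lemma edge_adj (A : ℝ) (P : Prop) [Decidable P] (hA : A = if P then 0 else 1)
    (s t : Prop) [Decidable s] [Decidable t] :
    (((if s ∧ t then A else 0) + (if ¬(s ↔ t) then (1:ℝ) else 0) / 2)
        - (if ¬(s ↔ t) ∧ P then (1:ℝ) else 0))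
      + ((if ¬s ∧ ¬t then A else 0) + (if ¬((¬s) ↔ (¬t)) then (1:ℝ) else 0) / 2) = A := by
  by_cases hP : P <;> by_cases hs : s <;> by_cases ht : t <;>
    simp [hP, hs, ht, hA] <;> norm_num

end Aux

/-- For a `G`-admissible divisor `D` of degree `d` on `Γ`: `μ_D*` is submodular, `μ_D` is
supermodular, and they form an adjoint modular pair: `μ_D(I) + μ_D*(I^c) = d` for all `I`. -/
theorem muStar_submodular_adjoint_pair
    (Γ : MetricGraph) (D : Divisor Γ) (hD : D.GAdmissible)
    (d : ℤ) (hd : D.deg = d) :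
    (muStar D ∅ = 0 ∧
      ∀ I J : Finset Γ.V, muStar D (I ∪ J) + muStar D (I ∩ J) ≤ muStar D I + muStar D J) ∧
    (muLow D ∅ = 0 ∧
      ∀ I J : Finset Γ.V, muLow D I + muLow D J ≤ muLow D (I ∪ J) + muLow D (I ∩ J)) ∧
    (∀ I : Finset Γ.V, muLow D I + muStar D (Finset.univ \ I) = (d : ℝ)) := by
  classical
  have hA0 : ∀ e, (0:ℝ) ≤ (D.interDeg e : ℝ) := by
    intro e; rw [interDeg_eq D hD e]; split_ifs <;> norm_num
  have hA1 : ∀ e, (D.interDeg e : ℝ) ≤ 1 := by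
    intro e; rw [interDeg_eq D hD e]; split_ifs <;> norm_num
  have hAP : ∀ e, (D.interDeg e : ℝ)
      = if ∀ t, D.inter e t = 0 then 0 else 1 := by
    intro e; rw [interDeg_eq D hD e]; split_ifs <;> norm_num
  refine ⟨⟨?_, ?_⟩, ⟨?_, ?_⟩, ?_⟩
  · rw [muStar_eq]; simp [edgeF]
  · intro I J
    rw [muStar_eq, muStar_eq, muStar_eq, muStar_eq]
    have hv : (∑ v ∈ I ∪ J, (D.vtx v : ℝ)) + ∑ v ∈ I ∩ J, (D.vtx v : ℝ)
        = (∑ v ∈ I, (D.vtx v : ℝ)) + ∑ v ∈ J, (D.vtx v : ℝ) :=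
      Finset.sum_union_inter
    have he : (∑ e, edgeF D (I ∪ J) e) + ∑ e, edgeF D (I ∩ J) e
        ≤ (∑ e, edgeF D I e) + ∑ e, edgeF D J e := by
      rw [← Finset.sum_add_distrib, ← Finset.sum_add_distrib]
      apply Finset.sum_le_sum
      intro e _
      have h := edge_sub (D.interDeg e : ℝ) (hA0 e) (hA1 e)
        (Γ.src e ∈ I) (Γ.tgt e ∈ I) (Γ.src e ∈ J) (Γ.tgt e ∈ J)
      simp only [edgeF, Finset.mem_union, Finset.mem_inter]
      convert h using 3
    linarith
  · rw [muLow_eq]; simp [edgeG, edgeF]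
  · intro I J
    rw [muLow_eq, muLow_eq, muLow_eq, muLow_eq]
    have hv : (∑ v ∈ I ∪ J, (D.vtx v : ℝ)) + ∑ v ∈ I ∩ J, (D.vtx v : ℝ)
        = (∑ v ∈ I, (D.vtx v : ℝ)) + ∑ v ∈ J, (D.vtx v : ℝ) :=
      Finset.sum_union_inter
    have he : (∑ e, edgeG D I e) + ∑ e, edgeG D J e
        ≤ (∑ e, edgeG D (I ∪ J) e) + ∑ e, edgeG D (I ∩ J) e := by
      rw [← Finset.sum_add_distrib, ← Finset.sum_add_distrib]
      apply Finset.sum_le_sum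
      intro e _
      have h := edge_sup (D.interDeg e : ℝ) (∀ t, D.inter e t = 0) (hAP e)
        (Γ.src e ∈ I) (Γ.tgt e ∈ I) (Γ.src e ∈ J) (Γ.tgt e ∈ J)
      simp only [edgeG, edgeF, Finset.mem_union, Finset.mem_inter]
      convert h using 3
    linarith
  · intro I
    rw [muLow_eq, muStar_eq]
    have hv : (∑ v ∈ I, (D.vtx v : ℝ)) + ∑ v ∈ Finset.univ \ I, (D.vtx v : ℝ)
        = ∑ v, (D.vtx v : ℝ) := by
      rw [add_comm]; exact Finset.sum_sdiff (Finset.subset_univ I)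
    have he : (∑ e, edgeG D I e) + ∑ e, edgeF D (Finset.univ \ I) e
        = ∑ e, (D.interDeg e : ℝ) := by
      rw [← Finset.sum_add_distrib]
      apply Finset.sum_congr rfl
      intro e _
      have h := edge_adj (D.interDeg e : ℝ) (∀ t, D.inter e t = 0) (hAP e)
        (Γ.src e ∈ I) (Γ.tgt e ∈ I)
      simp only [edgeG, edgeF, Finset.mem_sdiff, Finset.mem_univ, true_and]
      convert h using 3
    have hdeg : ((D.deg : ℤ) : ℝ) = (∑ v, (D.vtx v : ℝ)) + ∑ e, (D.interDeg e : ℝ) := by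
      rw [Divisor.deg]; push_cast; ring
    rw [← hd]
    linarith [hv, he, hdeg]
end

section
/- Let Γ be a metric graph with model (G,ℓ), D a divisor on Γ, and h a rational function on Γ such that D + div(h) is G-admissible. If h' is a rational function on Γ such that D + div(h') is effective outside the vertex set V, then h'(v) ≥ h(v) for all vertices v ∈ V implies h'(x) ≥ h(x) for all points x ∈ Γ. -/
/-- `g` is piecewise affine with integer slopes on `[0, L]`: there are breakpoints
`0 = t 0 < t 1 < ⋯ < t m = L` and integer slopes `s i` such that `g` is affine of slope
`s i` on `[t i, t (i+1)]`. -/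
def PWAffineZ (g : ℝ → ℝ) (L : ℝ) : Prop :=
  ∃ (m : ℕ) (t : ℕ → ℝ) (s : ℕ → ℤ), 0 < m ∧ t 0 = 0 ∧ t m = L ∧
    (∀ i j, i < j → j ≤ m → t i < t j) ∧
    ∀ i, i < m → ∀ x, t i ≤ x → x ≤ t (i + 1) →
      g x = g (t i) + (s i : ℝ) * (x - t i)

/-- A rational function on the metric graph `Γ`: a value at each vertex, and on each edge
`e` a continuous piecewise affine function with integer slopes on `[0, ℓ e]`, matching
the vertex values at the extremities. -/
structure RatFn (Γ : MetricGraph) where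
  vtx : Γ.V → ℝ
  edge : Γ.E → ℝ → ℝ
  edge_src : ∀ e, edge e 0 = vtx (Γ.src e)
  edge_tgt : ∀ e, edge e (Γ.len e) = vtx (Γ.tgt e)
  pw : ∀ e, PWAffineZ (edge e) (Γ.len e)

/-- `g` has slope `s` on a left neighborhood of `t`. -/
def HasLeftSlope (g : ℝ → ℝ) (t : ℝ) (s : ℤ) : Prop :=
  ∃ δ > 0, ∀ x ∈ Set.Ioo (t - δ) t, g x = g t + (s : ℝ) * (x - t)

/-- `g` has slope `s` on a right neighborhood of `t`. -/
def HasRightSlope (g : ℝ → ℝ) (t : ℝ) (s : ℤ) : Prop :=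
  ∃ δ > 0, ∀ x ∈ Set.Ioo t (t + δ), g x = g t + (s : ℝ) * (x - t)

/-- The order of vanishing of `g` at the interior point `t` is `n`: the sum of the
incoming slopes, i.e. `n = s⁻ - s⁺` for the one-sided slopes `s⁻, s⁺` at `t`. -/
def OrdAt (g : ℝ → ℝ) (t : ℝ) (n : ℤ) : Prop :=
  ∃ sl sr : ℤ, HasLeftSlope g t sl ∧ HasRightSlope g t sr ∧ n = sl - sr

/-- The coefficient of the divisor `D + div(h)` at the interior point of edge `e` with
parameter `t` is `c`. -/
def CoeffAt {Γ : MetricGraph} (D : Divisor Γ) (h : RatFn Γ) (e : Γ.E) (t : ℝ) (c : ℤ) :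
    Prop :=
  ∃ n : ℤ, OrdAt (h.edge e) t n ∧ c = D.inter e t + n

/-- `D + div(h)` is `G`-admissible: on the interior of each edge there is at most one
point with nonzero coefficient, and there the coefficient is `1`. -/
def AdmissibleSum {Γ : MetricGraph} (D : Divisor Γ) (h : RatFn Γ) : Prop :=
  ∀ e, ∀ t₁ t₂, t₁ ∈ Set.Ioo 0 (Γ.len e) → t₂ ∈ Set.Ioo 0 (Γ.len e) →
    ∀ c₁ c₂ : ℤ, CoeffAt D h e t₁ c₁ → CoeffAt D h e t₂ c₂ →
      c₁ ≠ 0 → c₂ ≠ 0 → t₁ = t₂ ∧ c₁ = 1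

/-- `D + div(h)` is effective outside the vertex set: all coefficients at interior
points of edges are nonnegative. -/
def EffectiveOutsideV {Γ : MetricGraph} (D : Divisor Γ) (h : RatFn Γ) : Prop :=
  ∀ e, ∀ t ∈ Set.Ioo 0 (Γ.len e), ∀ c : ℤ, CoeffAt D h e t c → 0 ≤ c

open Set Filter Topology

lemma exists_step (P : ℕ → Prop) [DecidablePred P] (m : ℕ) (h0 : P 0) (hm : ¬ P m) :
    ∃ i, i < m ∧ P i ∧ ¬ P (i + 1) := by
  have hPi : P (Nat.findGreatest P m) := Nat.findGreatest_spec (Nat.zero_le m) h0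
  have him : Nat.findGreatest P m ≤ m := Nat.findGreatest_le m
  have hlt : Nat.findGreatest P m < m :=
    lt_of_le_of_ne him (fun h => hm (h ▸ hPi))
  exact ⟨_, hlt, hPi, Nat.findGreatest_is_greatest (Nat.lt_succ_self _) hlt⟩

lemma hasLeftSlope_unique {g : ℝ → ℝ} {t : ℝ} {s₁ s₂ : ℤ}
    (h1 : HasLeftSlope g t s₁) (h2 : HasLeftSlope g t s₂) : s₁ = s₂ := by
  obtain ⟨δ₁, hδ₁, H₁⟩ := h1
  obtain ⟨δ₂, hδ₂, H₂⟩ := h2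
  obtain ⟨ε, hε, he1, he2⟩ : ∃ ε, 0 < ε ∧ ε ≤ δ₁ ∧ ε ≤ δ₂ :=
    ⟨min δ₁ δ₂, lt_min hδ₁ hδ₂, min_le_left _ _, min_le_right _ _⟩
  set x := t - ε / 2 with hx
  have hx1 : x ∈ Set.Ioo (t - δ₁) t := ⟨by simp only [hx]; linarith, by simp only [hx]; linarith⟩
  have hx2 : x ∈ Set.Ioo (t - δ₂) t := ⟨by simp only [hx]; linarith, by simp only [hx]; linarith⟩
  have heq := (H₁ x hx1).symm.trans (H₂ x hx2)
  have hxt : x - t ≠ 0 := by simp only [hx]; intro hc; linarith [(by linarith : -(ε/2) = (0:ℝ))]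
  have hmul : (s₁ : ℝ) * (x - t) = (s₂ : ℝ) * (x - t) := by linarith
  exact_mod_cast mul_right_cancel₀ hxt hmul

lemma hasRightSlope_unique {g : ℝ → ℝ} {t : ℝ} {s₁ s₂ : ℤ}
    (h1 : HasRightSlope g t s₁) (h2 : HasRightSlope g t s₂) : s₁ = s₂ := by
  obtain ⟨δ₁, hδ₁, H₁⟩ := h1
  obtain ⟨δ₂, hδ₂, H₂⟩ := h2
  obtain ⟨ε, hε, he1, he2⟩ : ∃ ε, 0 < ε ∧ ε ≤ δ₁ ∧ ε ≤ δ₂ :=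
    ⟨min δ₁ δ₂, lt_min hδ₁ hδ₂, min_le_left _ _, min_le_right _ _⟩
  set x := t + ε / 2 with hx
  have hx1 : x ∈ Set.Ioo t (t + δ₁) := ⟨by simp only [hx]; linarith, by simp only [hx]; linarith⟩
  have hx2 : x ∈ Set.Ioo t (t + δ₂) := ⟨by simp only [hx]; linarith, by simp only [hx]; linarith⟩
  have heq := (H₁ x hx1).symm.trans (H₂ x hx2)
  have hxt : x - t ≠ 0 := by simp only [hx]; intro hc; linarith
  have hmul : (s₁ : ℝ) * (x - t) = (s₂ : ℝ) * (x - t) := by linarith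
  exact_mod_cast mul_right_cancel₀ hxt hmul

lemma PWAffineZ.exists_rightSlope {g : ℝ → ℝ} {L : ℝ} (hg : PWAffineZ g L)
    {x : ℝ} (hx0 : 0 ≤ x) (hxL : x < L) : ∃ s : ℤ, HasRightSlope g x s := by
  classical
  obtain ⟨m, t, s, hm, h0, hL, hmono, haff⟩ := hg
  obtain ⟨i, hiltm, hPi, hnPi⟩ := exists_step (fun i => t i ≤ x) m
    (show t 0 ≤ x by rw [h0]; exact hx0) (show ¬ t m ≤ x by rw [hL]; exact not_le.mpr hxL)
  push_neg at hnPi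
  refine ⟨s i, t (i + 1) - x, by linarith, fun y hy => ?_⟩
  obtain ⟨hy1, hy2⟩ := hy
  have hgy := haff i hiltm y (le_trans hPi hy1.le) (by linarith)
  have hgx := haff i hiltm x hPi hnPi.le
  rw [hgy, hgx]; ring

lemma PWAffineZ.exists_leftSlope {g : ℝ → ℝ} {L : ℝ} (hg : PWAffineZ g L)
    {x : ℝ} (hx0 : 0 < x) (hxL : x ≤ L) : ∃ s : ℤ, HasLeftSlope g x s := by
  classical
  obtain ⟨m, t, s, hm, h0, hL, hmono, haff⟩ := hg
  obtain ⟨i, hiltm, hPi, hnPi⟩ := exists_step (fun i => t i < x) m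
    (show t 0 < x by rw [h0]; exact hx0) (show ¬ t m < x by rw [hL]; exact not_lt.mpr hxL)
  push_neg at hnPi
  refine ⟨s i, x - t i, by linarith, fun y hy => ?_⟩
  obtain ⟨hy1, hy2⟩ := hy
  have hgy := haff i hiltm y (by linarith) (by linarith)
  have hgx := haff i hiltm x hPi.le hnPi
  rw [hgy, hgx]; ring

lemma HasRightSlope.tendsto {g : ℝ → ℝ} {x : ℝ} {s : ℤ} (h : HasRightSlope g x s) :
    Tendsto g (𝓝[>] x) (𝓝 (g x)) := by
  obtain ⟨δ, hδ, H⟩ := h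
  have heq : g =ᶠ[𝓝[>] x] fun y => g x + (s : ℝ) * (y - x) :=
    eventually_of_mem (Ioo_mem_nhdsGT_of_mem ⟨le_refl x, by linarith⟩) H
  have hc : Continuous (fun y : ℝ => g x + (s : ℝ) * (y - x)) := by continuity
  have ht : Tendsto (fun y : ℝ => g x + (s : ℝ) * (y - x)) (𝓝[>] x) (𝓝 (g x)) := by
    have := (hc.tendsto x).mono_left (nhdsWithin_le_nhds (s := Set.Ioi x))
    simpa using this
  exact ht.congr' heq.symm

lemma HasLeftSlope.tendsto {g : ℝ → ℝ} {x : ℝ} {s : ℤ} (h : HasLeftSlope g x s) :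
    Tendsto g (𝓝[<] x) (𝓝 (g x)) := by
  obtain ⟨δ, hδ, H⟩ := h
  have heq : g =ᶠ[𝓝[<] x] fun y => g x + (s : ℝ) * (y - x) :=
    eventually_of_mem (Ioo_mem_nhdsLT_of_mem ⟨by linarith, le_refl x⟩) H
  have hc : Continuous (fun y : ℝ => g x + (s : ℝ) * (y - x)) := by continuity
  have ht : Tendsto (fun y : ℝ => g x + (s : ℝ) * (y - x)) (𝓝[<] x) (𝓝 (g x)) := by
    have := (hc.tendsto x).mono_left (nhdsWithin_le_nhds (s := Set.Iio x))
    simpa using this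
  exact ht.congr' heq.symm

lemma PWAffineZ.continuousOn {g : ℝ → ℝ} {L : ℝ} (hg : PWAffineZ g L) :
    ContinuousOn g (Set.Icc 0 L) := by
  intro x hx
  obtain ⟨hx0, hxL⟩ := hx
  have hsub : Set.Icc 0 L ⊆ (Set.Icc 0 L ∩ Set.Iio x) ∪ ({x} ∪ (Set.Icc 0 L ∩ Set.Ioi x)) := by
    intro y hy
    rcases lt_trichotomy y x with h | h | h
    · exact Or.inl ⟨hy, h⟩
    · exact Or.inr (Or.inl h)
    · exact Or.inr (Or.inr ⟨hy, h⟩)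
  have hA : Tendsto g (𝓝[Set.Icc 0 L ∩ Set.Iio x] x) (𝓝 (g x)) := by
    rcases eq_or_lt_of_le hx0 with h | h
    · have : Set.Icc 0 L ∩ Set.Iio x = (∅ : Set ℝ) := by
        ext y; simp only [Set.mem_inter_iff, Set.mem_Icc, Set.mem_Iio, Set.mem_empty_iff_false,
          iff_false]; rintro ⟨⟨h1, _⟩, h2⟩; rw [← h] at h2; linarith
      rw [this, nhdsWithin_empty]; exact tendsto_bot
    · obtain ⟨s, hs⟩ := hg.exists_leftSlope h hxL
      exact hs.tendsto.mono_left (nhdsWithin_mono x Set.inter_subset_right)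
  have hB : Tendsto g (𝓝[Set.Icc 0 L ∩ Set.Ioi x] x) (𝓝 (g x)) := by
    rcases eq_or_lt_of_le hxL with h | h
    · have : Set.Icc 0 L ∩ Set.Ioi x = (∅ : Set ℝ) := by
        ext y; simp only [Set.mem_inter_iff, Set.mem_Icc, Set.mem_Ioi, Set.mem_empty_iff_false,
          iff_false]; rintro ⟨⟨_, h1⟩, h2⟩; rw [h] at h2; linarith
      rw [this, nhdsWithin_empty]; exact tendsto_bot
    · obtain ⟨s, hs⟩ := hg.exists_rightSlope hx0 h
      exact hs.tendsto.mono_left (nhdsWithin_mono x Set.inter_subset_right)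
  have hP : Tendsto g (𝓝[{x}] x) (𝓝 (g x)) := by
    rw [nhdsWithin_singleton]
    exact (tendsto_pure_pure g x).mono_right (pure_le_nhds _)
  have hle : 𝓝[Set.Icc 0 L] x ≤ 𝓝[Set.Icc 0 L ∩ Set.Iio x] x ⊔
      (𝓝[{x}] x ⊔ 𝓝[Set.Icc 0 L ∩ Set.Ioi x] x) := by
    rw [← nhdsWithin_union, ← nhdsWithin_union]
    exact nhdsWithin_mono x hsub
  exact (hA.sup (hP.sup hB)).mono_left hle

/-- Domination property: if `D + div(h)` is `G`-admissible and `D + div(h')` is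
effective outside the vertex set `V`, then `h'(v) ≥ h(v)` for all vertices `v` implies
`h'(x) ≥ h(x)` for all points `x ∈ Γ`. -/
theorem domination_property
    (Γ : MetricGraph) (D : Divisor Γ) (h h' : RatFn Γ)
    (hadm : AdmissibleSum D h) (heff : EffectiveOutsideV D h')
    (hvtx : ∀ v, h.vtx v ≤ h'.vtx v) :
    ∀ e, ∀ t ∈ Set.Icc 0 (Γ.len e), h.edge e t ≤ h'.edge e t := by
  intro e τ hτ
  set L := Γ.len e with hLdef
  have hL : 0 < L := Γ.len_pos e
  set f := h.edge e with hf
  set g := h'.edge e with hg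
  have hcont : ContinuousOn (fun x => f x - g x) (Set.Icc 0 L) :=
    ((h.pw e).continuousOn).sub ((h'.pw e).continuousOn)
  obtain ⟨z, hz, hzmax⟩ := isCompact_Icc.exists_isMaxOn (Set.nonempty_Icc.mpr hL.le) hcont
  set M := f z - g z with hM
  have hmax : ∀ x ∈ Set.Icc 0 L, f x - g x ≤ M := fun x hx => hzmax hx
  rcases le_or_gt M 0 with hM0 | hM0
  · have := hmax τ hτ
    linarith
  · exfalso
    have e0 : f 0 - g 0 ≤ 0 := by
      rw [hf, hg, h.edge_src e, h'.edge_src e]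
      linarith [hvtx (Γ.src e)]
    have eL : f L - g L ≤ 0 := by
      rw [hf, hg, hLdef, h.edge_tgt e, h'.edge_tgt e]
      linarith [hvtx (Γ.tgt e)]
    set S := {x : ℝ | x ∈ Set.Icc 0 L ∧ f x - g x = M} with hSdef
    have hSeq : S = Set.Icc 0 L ∩ (fun x => f x - g x) ⁻¹' {M} := by
      ext x; simp [hSdef]
    have hScl : IsClosed S := by
      rw [hSeq]
      exact hcont.preimage_isClosed_of_isClosed isClosed_Icc isClosed_singleton
    have hSsub : S ⊆ Set.Icc 0 L := fun x hx => hx.1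
    have hScp : IsCompact S := isCompact_Icc.of_isClosed_subset hScl hSsub
    have hSne : S.Nonempty := ⟨z, hz, rfl⟩
    have hmemIoo : ∀ x ∈ S, x ∈ Set.Ioo 0 L := by
      rintro x ⟨⟨hx0, hxL⟩, hxM⟩
      constructor
      · rcases eq_or_lt_of_le hx0 with hh | hh
        · exfalso; rw [← hh] at hxM; linarith
        · exact hh
      · rcases eq_or_lt_of_le hxL with hh | hh
        · exfalso; rw [hh] at hxM; linarith
        · exact hh
    set t₀ := sInf S with ht₀def
    have ht₀S : t₀ ∈ S := hScp.sInf_mem hSne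
    set t₁ := sSup S with ht₁def
    have ht₁S : t₁ ∈ S := hScp.sSup_mem hSne
    have ht₀ : t₀ ∈ Set.Ioo 0 L := hmemIoo _ ht₀S
    have ht₁ : t₁ ∈ Set.Ioo 0 L := hmemIoo _ ht₁S
    have ht₀M : f t₀ - g t₀ = M := ht₀S.2
    have ht₁M : f t₁ - g t₁ = M := ht₁S.2
    -- slopes at t₀
    obtain ⟨al, hal⟩ := (h.pw e).exists_leftSlope ht₀.1 ht₀.2.le
    obtain ⟨ar, har⟩ := (h.pw e).exists_rightSlope ht₀.1.le ht₀.2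
    obtain ⟨bl, hbl⟩ := (h'.pw e).exists_leftSlope ht₀.1 ht₀.2.le
    obtain ⟨br, hbr⟩ := (h'.pw e).exists_rightSlope ht₀.1.le ht₀.2
    -- slopes at t₁
    obtain ⟨cl, hcl⟩ := (h.pw e).exists_leftSlope ht₁.1 ht₁.2.le
    obtain ⟨cr, hcr⟩ := (h.pw e).exists_rightSlope ht₁.1.le ht₁.2
    obtain ⟨dl, hdl⟩ := (h'.pw e).exists_leftSlope ht₁.1 ht₁.2.le
    obtain ⟨dr, hdr⟩ := (h'.pw e).exists_rightSlope ht₁.1.le ht₁.2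
    -- Claim 1 : 1 ≤ al - bl
    have claim1 : 1 ≤ al - bl := by
      by_contra hc
      push_neg at hc
      have hc' : (al : ℝ) - bl ≤ 0 := by exact_mod_cast (by omega : al - bl ≤ 0)
      obtain ⟨δa, hδa, Ha⟩ := hal
      obtain ⟨δb, hδb, Hb⟩ := hbl
      obtain ⟨ε, hε, he1, he2, he3⟩ : ∃ ε, 0 < ε ∧ ε ≤ δa ∧ ε ≤ δb ∧ ε ≤ t₀ :=
        ⟨min (min δa δb) t₀, lt_min (lt_min hδa hδb) ht₀.1,
          le_trans (min_le_left _ _) (min_le_left _ _),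
          le_trans (min_le_left _ _) (min_le_right _ _), min_le_right _ _⟩
      set x := t₀ - ε / 2 with hx
      have hxa : x ∈ Set.Ioo (t₀ - δa) t₀ := ⟨by simp only [hx]; linarith, by simp only [hx]; linarith⟩
      have hxb : x ∈ Set.Ioo (t₀ - δb) t₀ := ⟨by simp only [hx]; linarith, by simp only [hx]; linarith⟩
      have hxI : x ∈ Set.Icc 0 L := ⟨by simp only [hx]; linarith, by simp only [hx]; linarith [ht₀.2]⟩
      have hfx := Ha x hxa
      have hgx := Hb x hxb
      rw [← hf] at hfx
      rw [← hg] at hgx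
      have hφ : f x - g x = M + ((al : ℝ) - bl) * (x - t₀) := by
        rw [hfx, hgx]; rw [← ht₀M]; ring
      have hge : M ≤ f x - g x := by
        have hxt : x - t₀ ≤ 0 := by simp only [hx]; linarith
        have hp : 0 ≤ ((al : ℝ) - bl) * (x - t₀) := by
          have h2 := mul_nonneg (neg_nonneg.2 hc') (neg_nonneg.2 hxt)
          rw [neg_mul_neg] at h2; exact h2
        linarith
      have hle := hmax x hxI
      have hxS : x ∈ S := ⟨hxI, le_antisymm hle hge⟩
      have := csInf_le hScp.bddBelow hxS
      rw [← ht₀def] at this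
      simp only [hx] at this
      linarith
    -- Claim 2 : ar - br ≤ 0
    have claim2 : ar - br ≤ 0 := by
      by_contra hc
      push_neg at hc
      have hc' : (1 : ℝ) ≤ (ar : ℝ) - br := by exact_mod_cast (by omega : 1 ≤ ar - br)
      obtain ⟨δa, hδa, Ha⟩ := har
      obtain ⟨δb, hδb, Hb⟩ := hbr
      obtain ⟨ε, hε, he1, he2, he3⟩ : ∃ ε, 0 < ε ∧ ε ≤ δa ∧ ε ≤ δb ∧ ε ≤ L - t₀ :=
        ⟨min (min δa δb) (L - t₀), lt_min (lt_min hδa hδb) (by linarith [ht₀.2]),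
          le_trans (min_le_left _ _) (min_le_left _ _),
          le_trans (min_le_left _ _) (min_le_right _ _), min_le_right _ _⟩
      set x := t₀ + ε / 2 with hx
      have hxa : x ∈ Set.Ioo t₀ (t₀ + δa) := ⟨by simp only [hx]; linarith, by simp only [hx]; linarith⟩
      have hxb : x ∈ Set.Ioo t₀ (t₀ + δb) := ⟨by simp only [hx]; linarith, by simp only [hx]; linarith⟩
      have hxI : x ∈ Set.Icc 0 L := ⟨by simp only [hx]; linarith [ht₀.1], by simp only [hx]; linarith⟩
      have hfx := Ha x hxa
      have hgx := Hb x hxb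
      rw [← hf] at hfx
      rw [← hg] at hgx
      have hφ : f x - g x = M + ((ar : ℝ) - br) * (x - t₀) := by
        rw [hfx, hgx]; rw [← ht₀M]; ring
      have hgt : M < f x - g x := by
        have hxt : 0 < x - t₀ := by simp only [hx]; linarith
        have hp : 0 < ((ar : ℝ) - br) * (x - t₀) := mul_pos (by linarith) hxt
        linarith
      have hle := hmax x hxI
      linarith
    -- Claim 3 : 0 ≤ cl - dl
    have claim3 : 0 ≤ cl - dl := by
      by_contra hc
      push_neg at hc
      have hc' : (cl : ℝ) - dl ≤ -1 := by exact_mod_cast (by omega : cl - dl ≤ -1)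
      obtain ⟨δa, hδa, Ha⟩ := hcl
      obtain ⟨δb, hδb, Hb⟩ := hdl
      obtain ⟨ε, hε, he1, he2, he3⟩ : ∃ ε, 0 < ε ∧ ε ≤ δa ∧ ε ≤ δb ∧ ε ≤ t₁ :=
        ⟨min (min δa δb) t₁, lt_min (lt_min hδa hδb) ht₁.1,
          le_trans (min_le_left _ _) (min_le_left _ _),
          le_trans (min_le_left _ _) (min_le_right _ _), min_le_right _ _⟩
      set x := t₁ - ε / 2 with hx
      have hxa : x ∈ Set.Ioo (t₁ - δa) t₁ := ⟨by simp only [hx]; linarith, by simp only [hx]; linarith⟩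
      have hxb : x ∈ Set.Ioo (t₁ - δb) t₁ := ⟨by simp only [hx]; linarith, by simp only [hx]; linarith⟩
      have hxI : x ∈ Set.Icc 0 L := ⟨by simp only [hx]; linarith, by simp only [hx]; linarith [ht₁.2]⟩
      have hfx := Ha x hxa
      have hgx := Hb x hxb
      rw [← hf] at hfx
      rw [← hg] at hgx
      have hφ : f x - g x = M + ((cl : ℝ) - dl) * (x - t₁) := by
        rw [hfx, hgx]; rw [← ht₁M]; ring
      have hgt : M < f x - g x := by
        have hxt : x - t₁ < 0 := by simp only [hx]; linarith
        have hp : 0 < ((cl : ℝ) - dl) * (x - t₁) := by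
          have h2 := mul_pos (neg_pos.2 (by linarith : (cl : ℝ) - dl < 0)) (neg_pos.2 hxt)
          rw [neg_mul_neg] at h2; exact h2
        linarith
      have hle := hmax x hxI
      linarith
    -- Claim 4 : cr - dr ≤ -1
    have claim4 : cr - dr ≤ -1 := by
      by_contra hc
      push_neg at hc
      have hc' : (0 : ℝ) ≤ (cr : ℝ) - dr := by exact_mod_cast (by omega : 0 ≤ cr - dr)
      obtain ⟨δa, hδa, Ha⟩ := hcr
      obtain ⟨δb, hδb, Hb⟩ := hdr
      obtain ⟨ε, hε, he1, he2, he3⟩ : ∃ ε, 0 < ε ∧ ε ≤ δa ∧ ε ≤ δb ∧ ε ≤ L - t₁ :=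
        ⟨min (min δa δb) (L - t₁), lt_min (lt_min hδa hδb) (by linarith [ht₁.2]),
          le_trans (min_le_left _ _) (min_le_left _ _),
          le_trans (min_le_left _ _) (min_le_right _ _), min_le_right _ _⟩
      set x := t₁ + ε / 2 with hx
      have hxa : x ∈ Set.Ioo t₁ (t₁ + δa) := ⟨by simp only [hx]; linarith, by simp only [hx]; linarith⟩
      have hxb : x ∈ Set.Ioo t₁ (t₁ + δb) := ⟨by simp only [hx]; linarith, by simp only [hx]; linarith⟩
      have hxI : x ∈ Set.Icc 0 L := ⟨by simp only [hx]; linarith [ht₁.1], by simp only [hx]; linarith⟩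
      have hfx := Ha x hxa
      have hgx := Hb x hxb
      rw [← hf] at hfx
      rw [← hg] at hgx
      have hφ : f x - g x = M + ((cr : ℝ) - dr) * (x - t₁) := by
        rw [hfx, hgx]; rw [← ht₁M]; ring
      have hge : M ≤ f x - g x := by
        have hxt : 0 ≤ x - t₁ := by simp only [hx]; linarith
        have hp : 0 ≤ ((cr : ℝ) - dr) * (x - t₁) := mul_nonneg hc' hxt
        linarith
      have hle := hmax x hxI
      have hxS : x ∈ S := ⟨hxI, le_antisymm hle hge⟩
      have := le_csSup hScp.bddAbove hxS
      rw [← ht₁def] at this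
      simp only [hx] at this
      linarith
    -- effectivity of D + div(h') at t₀ and t₁
    have hcg0 : (0 : ℤ) ≤ D.inter e t₀ + (bl - br) :=
      heff e t₀ ht₀ _ ⟨bl - br, ⟨bl, br, hbl, hbr, rfl⟩, rfl⟩
    have hcg1 : (0 : ℤ) ≤ D.inter e t₁ + (dl - dr) :=
      heff e t₁ ht₁ _ ⟨dl - dr, ⟨dl, dr, hdl, hdr, rfl⟩, rfl⟩
    -- coefficients of D + div(h) at t₀ and t₁
    have hcoeff0 : CoeffAt D h e t₀ (D.inter e t₀ + (al - ar)) :=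
      ⟨al - ar, ⟨al, ar, hal, har, rfl⟩, rfl⟩
    have hcoeff1 : CoeffAt D h e t₁ (D.inter e t₁ + (cl - cr)) :=
      ⟨cl - cr, ⟨cl, cr, hcl, hcr, rfl⟩, rfl⟩
    have hcf0 : 1 ≤ D.inter e t₀ + (al - ar) := by omega
    have hcf1 : 1 ≤ D.inter e t₁ + (cl - cr) := by omega
    obtain ⟨hteq, hone⟩ := hadm e t₀ t₁ ht₀ ht₁ _ _ hcoeff0 hcoeff1 (by omega) (by omega)
    rw [← hteq] at hcr hdr
    have har' : ar = cr := hasRightSlope_unique har hcr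
    have hbr' : br = dr := hasRightSlope_unique hbr hdr
    omega
end

section
/- Let Γ be a metric graph with model (G,ℓ) and D a divisor on Γ. For every function f : V → ℝ there exists a unique rational function f̂ : Γ → ℝ extending f such that D + div(f̂) is G-admissible. -/
/-!
On an edge of length `L`, a rational function `h` is determined on `[0, L]` by its value `a` at
`0`, its initial slope `σ` and the slope jumps `w(u)` at its kinks `u ∈ (0, L)`:
`h y = a + σ y + ∑ w(u) (y - u)⁺`, and `ord_u h = -w(u)`. So the interior part of
`D + div h` on the edge is `D_e - w`, and `G`-admissibility says that `D_e - w` is `0` or `δ_x`,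
i.e. `h y = a + σ y + ∑ D_e(u) (y - u)⁺ - (y - x)⁺` with `x ∈ (0, L]`, where `x = L` stands
for the case `0`. Then `h L = a + σ L + ∑ D_e(u) (L - u) - (L - x)`; as `x / L` ranges over
`(0, 1]`, the endpoint value `b = h L` pins down `σ = ⌈r⌉` and `x = (r - ⌈r⌉ + 1) L` for
`r = (b - a - ∑ D_e(u) (L - u)) / L`. The edges do not interact.
-/

open Set Filter Topology

section OneSidedSlopes

variable {g g' : ℝ → ℝ} {t : ℝ} {s s₁ s₂ n n₁ n₂ : ℤ}

lemma hasRightSlope_iff_eventually :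
    HasRightSlope g t s ↔ ∀ᶠ x in 𝓝[>] t, g x = g t + s * (x - t) := by
  rw [(nhdsGT_basis t).eventually_iff]
  constructor
  · rintro ⟨δ, hδ, H⟩
    exact ⟨t + δ, by linarith, H⟩
  · rintro ⟨x, hx, H⟩
    exact ⟨x - t, sub_pos.2 hx, by rwa [add_sub_cancel]⟩

lemma hasLeftSlope_iff_eventually :
    HasLeftSlope g t s ↔ ∀ᶠ x in 𝓝[<] t, g x = g t + s * (x - t) := by
  rw [(nhdsLT_basis t).eventually_iff]
  constructor
  · rintro ⟨δ, hδ, H⟩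
    exact ⟨t - δ, by linarith, H⟩
  · rintro ⟨x, hx, H⟩
    exact ⟨t - x, sub_pos.2 hx, by rwa [sub_sub_cancel]⟩

lemma slope_eq_of_ne {x : ℝ} (hx : x ≠ t) (h₁ : g x = g t + s₁ * (x - t))
    (h₂ : g x = g t + s₂ * (x - t)) : s₁ = s₂ := by
  have : (s₁ : ℝ) * (x - t) = s₂ * (x - t) := by linarith
  exact_mod_cast mul_right_cancel₀ (sub_ne_zero.2 hx) this

lemma HasRightSlope.unique (h₁ : HasRightSlope g t s₁) (h₂ : HasRightSlope g t s₂) :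
    s₁ = s₂ := by
  rw [hasRightSlope_iff_eventually] at h₁ h₂
  obtain ⟨x, hx₁, hx₂, hx⟩ := (h₁.and (h₂.and self_mem_nhdsWithin)).exists
  exact slope_eq_of_ne (ne_of_gt hx) hx₁ hx₂

lemma HasLeftSlope.unique (h₁ : HasLeftSlope g t s₁) (h₂ : HasLeftSlope g t s₂) :
    s₁ = s₂ := by
  rw [hasLeftSlope_iff_eventually] at h₁ h₂
  obtain ⟨x, hx₁, hx₂, hx⟩ := (h₁.and (h₂.and self_mem_nhdsWithin)).exists
  exact slope_eq_of_ne (ne_of_lt hx) hx₁ hx₂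

lemma HasRightSlope.congr (h : HasRightSlope g t s) (hg : g =ᶠ[𝓝 t] g') :
    HasRightSlope g' t s := by
  rw [hasRightSlope_iff_eventually] at h ⊢
  filter_upwards [h, nhdsWithin_le_nhds hg] with x hx hgx
  rw [← hgx, hx, hg.eq_of_nhds]

lemma HasLeftSlope.congr (h : HasLeftSlope g t s) (hg : g =ᶠ[𝓝 t] g') :
    HasLeftSlope g' t s := by
  rw [hasLeftSlope_iff_eventually] at h ⊢
  filter_upwards [h, nhdsWithin_le_nhds hg] with x hx hgx
  rw [← hgx, hx, hg.eq_of_nhds]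

lemma OrdAt.unique (h₁ : OrdAt g t n₁) (h₂ : OrdAt g t n₂) : n₁ = n₂ := by
  obtain ⟨l₁, r₁, hl₁, hr₁, rfl⟩ := h₁
  obtain ⟨l₂, r₂, hl₂, hr₂, rfl⟩ := h₂
  rw [hl₁.unique hl₂, hr₁.unique hr₂]

lemma OrdAt.congr (h : OrdAt g t n) (hg : g =ᶠ[𝓝 t] g') : OrdAt g' t n := by
  obtain ⟨l, r, hl, hr, rfl⟩ := h
  exact ⟨l, r, hl.congr hg, hr.congr hg, rfl⟩

end OneSidedSlopes

lemma pwAffineZ_of_finset {g : ℝ → ℝ} {L : ℝ} {T : Finset ℝ} (hL : 0 < L)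
    (hT : ∀ u ∈ T, u ∈ Icc 0 L) (h0 : 0 ∈ T) (hLT : L ∈ T)
    (hg : ∀ p ∈ T, ∃ s : ℤ, ∀ y ∈ Icc p L, (∀ u ∈ T, u ≤ p ∨ y ≤ u) →
      g y = g p + s * (y - p)) :
    PWAffineZ g L := by
  choose! s hs using hg
  have hcard : 2 ≤ T.card := by
    simpa [Finset.card_pair hL.ne] using
      Finset.card_le_card (s := {0, L}) (by simp [*, Finset.insert_subset_iff])
  set e := T.orderEmbOfFin rfl
  let t : ℕ → ℝ := fun i => e ⟨min i (T.card - 1), by omega⟩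
  have ht : ∀ i (hi : i ≤ T.card - 1), t i = e ⟨i, by omega⟩ := fun i hi => by
    simp [t, min_eq_left hi]
  refine ⟨T.card - 1, t, fun i => s (t i), by omega, ?_, ?_, ?_, ?_⟩
  · rw [ht 0 (Nat.zero_le _), Finset.orderEmbOfFin_zero rfl (by omega)]
    exact le_antisymm (Finset.min'_le _ _ h0) (hT _ (Finset.min'_mem _ _)).1
  · rw [ht _ le_rfl, Finset.orderEmbOfFin_last rfl (by omega)]
    exact le_antisymm (hT _ (Finset.max'_mem _ _)).2 (Finset.le_max' _ _ hLT)
  · intro i j hij hj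
    rw [ht i (by omega), ht j hj]
    exact e.strictMono (Fin.mk_lt_mk.2 hij)
  · intro i hi x hx₁ hx₂
    have hti : t i ∈ T := Finset.orderEmbOfFin_mem _ _ _
    have hnext : t (i + 1) ≤ L := (hT _ (Finset.orderEmbOfFin_mem _ _ _)).2
    refine hs (t i) hti x ⟨hx₁, hx₂.trans hnext⟩ fun u hu => ?_
    obtain ⟨k, rfl⟩ : u ∈ Set.range e := by rwa [Finset.range_orderEmbOfFin]
    rw [ht i hi.le] at hx₁ ⊢
    rw [ht (i + 1) hi] at hx₂
    rcases le_or_gt (k : ℕ) i with hk | hk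
    · exact Or.inl (e.monotone (Fin.mk_le_mk.2 hk))
    · exact Or.inr (hx₂.trans (e.monotone (Fin.mk_le_mk.2 hk)))

noncomputable def pwl (A : ℝ) (σ : ℤ) (w : ℝ →₀ ℤ) (y : ℝ) : ℝ :=
  A + σ * y + w.sum fun u k => k * max (y - u) 0

section Pwl

variable {A : ℝ} {σ : ℤ} {w : ℝ →₀ ℤ}

lemma pwl_add_single (u : ℝ) (k : ℤ) (y : ℝ) :
    pwl A σ (w + Finsupp.single u k) y = pwl A σ w y + k * max (y - u) 0 := by
  simp only [pwl]
  rw [Finsupp.sum_add_index' (by simp) (fun _ _ _ => by push_cast; ring),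
    Finsupp.sum_single_index (by simp)]
  ring

lemma pwl_sub_single (u : ℝ) (k : ℤ) (y : ℝ) :
    pwl A σ (w - Finsupp.single u k) y = pwl A σ w y - k * max (y - u) 0 := by
  simp only [pwl]
  rw [Finsupp.sum_sub_index (fun _ _ _ => by push_cast; ring),
    Finsupp.sum_single_index (by simp)]
  ring

lemma pwl_zero (hw : ∀ u ∈ w.support, 0 ≤ u) : pwl A σ w 0 = A := by
  simp only [pwl, mul_zero, add_zero, Finsupp.sum, add_eq_left]
  exact Finset.sum_eq_zero fun u hu => by simp [hw u hu]

lemma pwl_of_support_le {y : ℝ} (hw : ∀ u ∈ w.support, u ≤ y) :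
    pwl A σ w y = A + σ * y + w.sum fun u k => k * (y - u) := by
  simp only [pwl, Finsupp.sum]
  congr 1
  exact Finset.sum_congr rfl fun u hu => by rw [max_eq_left (sub_nonneg.2 (hw u hu))]

lemma pwl_eq_add_mul_of_no_kink {p y : ℝ} (hpy : p ≤ y)
    (hw : ∀ u ∈ w.support, u ≤ p ∨ y ≤ u) :
    pwl A σ w y =
      pwl A σ w p + ((σ + ∑ u ∈ w.support with u ≤ p, w u : ℤ) : ℝ) * (y - p) := by
  have hterm : ∀ u ∈ w.support, (w u : ℝ) * max (y - u) 0 =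
      w u * max (p - u) 0 + (if u ≤ p then (w u : ℝ) else 0) * (y - p) := by
    intro u hu
    by_cases h : u ≤ p
    · rw [if_pos h, max_eq_left (by linarith), max_eq_left (by linarith)]; ring
    · have hyu := (hw u hu).resolve_left h
      rw [if_neg h, max_eq_right (by linarith), max_eq_right (by linarith)]; ring
  simp only [pwl, Finsupp.sum]
  rw [Finset.sum_congr rfl hterm, Finset.sum_add_distrib, ← Finset.sum_mul, Int.cast_add,
    Int.cast_sum, Finset.sum_filter]
  ring

variable {t : ℝ}

lemma hasRightSlope_pwl :
    HasRightSlope (pwl A σ w) t (σ + ∑ u ∈ w.support with u ≤ t, w u) := by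
  have hnokink : ∀ᶠ x in 𝓝[>] t, ∀ u ∈ w.support, u ≤ t ∨ x ≤ u :=
    (eventually_all_finset _).2 fun u _ => by
      rcases le_or_gt u t with h | h
      · exact Eventually.of_forall fun _ => Or.inl h
      · exact eventually_nhdsWithin_of_eventually_nhds
          ((eventually_le_nhds h).mono fun _ hx => Or.inr hx)
  rw [hasRightSlope_iff_eventually]
  filter_upwards [hnokink, self_mem_nhdsWithin] with x hx hxt
  exact pwl_eq_add_mul_of_no_kink (le_of_lt hxt) hx

lemma hasLeftSlope_pwl :
    HasLeftSlope (pwl A σ w) t (σ + ∑ u ∈ w.support with u < t, w u) := by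
  have hnokink : ∀ᶠ x in 𝓝[<] t, ∀ u ∈ w.support, u < x ∨ t ≤ u :=
    (eventually_all_finset _).2 fun u _ => by
      rcases lt_or_ge u t with h | h
      · exact eventually_nhdsWithin_of_eventually_nhds
          ((eventually_gt_nhds h).mono fun _ hx => Or.inl hx)
      · exact Eventually.of_forall fun _ => Or.inr h
  rw [hasLeftSlope_iff_eventually]
  filter_upwards [hnokink, self_mem_nhdsWithin] with x hx (hxt : x < t)
  have hsum : ∑ u ∈ w.support with u ≤ x, w u = ∑ u ∈ w.support with u < t, w u := by
    refine Finset.sum_congr (Finset.filter_congr fun u hu => ?_) fun _ _ => rfl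
    rcases hx u hu with h | h
    · exact ⟨fun _ => h.trans hxt, fun _ => h.le⟩
    · exact ⟨fun h' => absurd (h'.trans_lt hxt) (not_lt.2 h), fun h' => absurd h (not_le.2 h')⟩
  have := pwl_eq_add_mul_of_no_kink (A := A) (σ := σ) hxt.le
    fun u hu => (hx u hu).imp_left le_of_lt
  rw [hsum] at this
  linear_combination -this

lemma ordAt_pwl : OrdAt (pwl A σ w) t (-w t) := by
  refine ⟨_, _, hasLeftSlope_pwl, hasRightSlope_pwl, ?_⟩
  have hsplit : ∀ u, (if u ≤ t then w u else 0) =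
      (if u < t then w u else 0) + if u = t then w u else 0 := by
    intro u
    rcases lt_trichotomy u t with h | rfl | h
    · simp [h, h.le, h.ne]
    · simp
    · simp [not_le.2 h, not_lt.2 h.le, h.ne']
  rw [Finset.sum_filter, Finset.sum_filter, Finset.sum_congr rfl fun u _ => hsplit u,
    Finset.sum_add_distrib, Finset.sum_ite_eq']
  split_ifs with h
  · ring
  · simp [Finsupp.notMem_support_iff.1 h]

lemma pwAffineZ_pwl {L : ℝ} (hL : 0 < L) : PWAffineZ (pwl A σ w) L := by
  classical
  refine pwAffineZ_of_finset (T := insert 0 (insert L {u ∈ w.support | u ∈ Ioo 0 L})) hL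
    ?_ (by simp) (by simp) fun p hp => ⟨_, fun y hy hT => pwl_eq_add_mul_of_no_kink hy.1 ?_⟩
  · intro u hu
    simp only [Finset.mem_insert, Finset.mem_filter] at hu
    rcases hu with rfl | rfl | ⟨-, hu⟩
    exacts [⟨le_rfl, hL.le⟩, ⟨hL.le, le_rfl⟩, Ioo_subset_Icc_self hu]
  · have hp0 : 0 ≤ p := by
      simp only [Finset.mem_insert, Finset.mem_filter] at hp
      rcases hp with rfl | rfl | ⟨-, hp⟩
      exacts [le_rfl, hL.le, hp.1.le]
    intro u hu
    by_cases hu0 : u ≤ 0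
    · exact Or.inl (hu0.trans hp0)
    by_cases huL : L ≤ u
    · exact Or.inr (hy.2.trans huL)
    exact hT u (by simp [hu, not_le.1 hu0, not_le.1 huL])

end Pwl

/-- Induction on the breakpoints, adding the slope jump at each of them. -/
lemma PWAffineZ.exists_eqOn_pwl {g : ℝ → ℝ} {L : ℝ} (hg : PWAffineZ g L) :
    ∃ (σ : ℤ) (w : ℝ →₀ ℤ), (∀ u ∈ w.support, u ∈ Ioo 0 L) ∧
      EqOn g (pwl (g 0) σ w) (Icc 0 L) := by
  obtain ⟨m, t, s, hm, ht0, htm, hmono, haff⟩ := hg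
  have hstep : ∀ i < m, ∃ w : ℝ →₀ ℤ, (∀ u ∈ w.support, 0 < u ∧ u ≤ t i) ∧
      EqOn g (pwl (g 0) (s 0) w) (Icc 0 (t (i + 1))) ∧ s 0 + (w.sum fun _ k => k) = s i := by
    intro i
    induction i with
    | zero =>
      intro _
      refine ⟨0, by simp, fun y hy => ?_, by simp⟩
      rw [haff 0 hm y (ht0 ▸ hy.1) hy.2, pwl, ht0]
      simp
    | succ i ih =>
      intro hi
      obtain ⟨w, hw, hEq, hsum⟩ := ih (by omega)
      have hti : t i < t (i + 1) := hmono i (i + 1) (by omega) (by omega)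
      refine ⟨w + Finsupp.single (t (i + 1)) (s (i + 1) - s i), fun u hu => ?_,
        fun y hy => ?_, ?_⟩
      · rcases Finset.mem_union.1 (Finsupp.support_add hu) with hu | hu
        · exact ⟨(hw u hu).1, (hw u hu).2.trans hti.le⟩
        · rw [Finset.mem_singleton.1 (Finsupp.support_single_subset hu), ← ht0]
          exact ⟨hmono 0 (i + 1) (by omega) (by omega), le_rfl⟩
      · rw [pwl_add_single]
        rcases le_or_gt y (t (i + 1)) with hy' | hy'
        · rw [hEq ⟨hy.1, hy'⟩, max_eq_right (by linarith)]
          ring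
        · have hall : ∑ u ∈ w.support with u ≤ t (i + 1), w u = w.sum fun _ k => k :=
            Finset.sum_congr (Finset.filter_true_of_mem fun u hu => (hw u hu).2.trans hti.le)
              fun _ _ => rfl
          rw [pwl_eq_add_mul_of_no_kink hy'.le fun u hu => Or.inl ((hw u hu).2.trans hti.le),
            hall, hsum, ← hEq ⟨(ht0 ▸ hmono 0 (i + 1) (by omega) (by omega)).le, le_rfl⟩,
            haff (i + 1) hi y hy'.le hy.2, max_eq_left (by linarith)]
          push_cast
          ring
      · rw [Finsupp.sum_add_index' (fun _ => rfl) (fun _ _ _ => rfl),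
          Finsupp.sum_single_index rfl]
        omega
  obtain ⟨w, hw, hEq, -⟩ := hstep (m - 1) (by omega)
  refine ⟨s 0, w, fun u hu => ⟨(hw u hu).1, ?_⟩, ?_⟩
  · exact (hw u hu).2.trans_lt (htm ▸ hmono (m - 1) m (by omega) le_rfl)
  · rwa [Nat.sub_add_cancel hm, htm] at hEq

lemma Finsupp.eq_zero_or_eq_single_one {α : Type*} {c : α →₀ ℤ}
    (h : ∀ a b, c a ≠ 0 → c b ≠ 0 → a = b ∧ c a = 1) :
    c = 0 ∨ ∃ x, c x ≠ 0 ∧ c = single x 1 := by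
  classical
  by_cases hc : c = 0
  · exact Or.inl hc
  obtain ⟨x, hx⟩ := Finsupp.ne_iff.1 hc
  refine Or.inr ⟨x, hx, Finsupp.ext fun a => ?_⟩
  by_cases ha : c a = 0
  · rw [ha, Finsupp.single_apply, if_neg]
    rintro rfl
    exact hx ha
  · obtain ⟨rfl, h1⟩ := h a x ha hx
    rw [h1, Finsupp.single_eq_same]

noncomputable def Divisor.edgeFinsupp {Γ : MetricGraph} (D : Divisor Γ) (e : Γ.E) :
    ℝ →₀ ℤ :=
  Finsupp.ofSupportFinite (D.inter e) (D.finite_supp e)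

namespace Divisor

variable {Γ : MetricGraph} (D : Divisor Γ) {e : Γ.E}

@[simp]
lemma edgeFinsupp_apply (t : ℝ) : D.edgeFinsupp e t = D.inter e t := rfl

lemma mem_Ioo_of_mem_support_edgeFinsupp {u : ℝ} (hu : u ∈ (D.edgeFinsupp e).support) :
    u ∈ Ioo 0 (Γ.len e) :=
  D.supp_mem e u (Finsupp.mem_support_iff.1 hu)

end Divisor

section Admissible

variable {Γ : MetricGraph} {D : Divisor Γ} {h : RatFn Γ} {e : Γ.E}

lemma coeffAt_iff {t : ℝ} {c : ℤ} {A : ℝ} {σ : ℤ} {w : ℝ →₀ ℤ}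
    (ht : t ∈ Ioo 0 (Γ.len e)) (hh : EqOn (h.edge e) (pwl A σ w) (Icc 0 (Γ.len e))) :
    CoeffAt D h e t c ↔ c = (D.edgeFinsupp e - w) t := by
  have hnhds : pwl A σ w =ᶠ[𝓝 t] h.edge e :=
    (eventuallyEq_of_mem (Icc_mem_nhds ht.1 ht.2) hh).symm
  have hord : ∀ n, OrdAt (h.edge e) t n ↔ n = -w t := fun n =>
    ⟨fun hn => hn.unique (ordAt_pwl.congr hnhds), by rintro rfl; exact ordAt_pwl.congr hnhds⟩
  simp only [CoeffAt, hord, exists_eq_left, Finsupp.coe_sub, Pi.sub_apply,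
    Divisor.edgeFinsupp_apply, ← sub_eq_add_neg]

/-- The kink `x = ℓ e` encodes the case where `D + div h` vanishes on the interior of `e`. -/
lemma admissibleSum_iff : AdmissibleSum D h ↔ ∀ e, ∃ (σ : ℤ), ∃ x ∈ Ioc 0 (Γ.len e),
    EqOn (h.edge e) (pwl (h.vtx (Γ.src e)) σ (D.edgeFinsupp e - Finsupp.single x 1))
      (Icc 0 (Γ.len e)) := by
  constructor
  · intro hadm e
    obtain ⟨σ, w, hw, hEq⟩ := (h.pw e).exists_eqOn_pwl
    rw [h.edge_src] at hEq
    set c := D.edgeFinsupp e - w with hcdef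
    have hsupp : ∀ u, c u ≠ 0 → u ∈ Ioo 0 (Γ.len e) := by
      intro u hu
      by_contra hu'
      have hd : D.inter e u = 0 := by_contra fun hd => hu' (D.supp_mem e u hd)
      have hwu : w u = 0 := Finsupp.notMem_support_iff.1 fun hw' => hu' (hw u hw')
      simp [c, hd, hwu] at hu
    have hcoeff : ∀ u, c u ≠ 0 → CoeffAt D h e u (c u) := fun u hu =>
      (coeffAt_iff (hsupp u hu) hEq).2 rfl
    rcases Finsupp.eq_zero_or_eq_single_one fun a b ha hb =>
        hadm e a b (hsupp a ha) (hsupp b hb) _ _ (hcoeff a ha) (hcoeff b hb) ha hb with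
      hc | ⟨x, hx, hcx⟩
    · refine ⟨σ, Γ.len e, ⟨Γ.len_pos e, le_rfl⟩, fun y hy => ?_⟩
      rw [hEq hy, ← sub_eq_zero.1 hc, pwl_sub_single, max_eq_right (by linarith [hy.2])]
      ring
    · refine ⟨σ, x, Ioo_subset_Ioc_self (hsupp x hx), ?_⟩
      rwa [← hcx, hcdef, sub_sub_cancel]
  · intro hrep e t₁ t₂ ht₁ ht₂ c₁ c₂ h₁ h₂ hc₁ hc₂
    obtain ⟨σ, x, -, hEq⟩ := hrep e
    rw [coeffAt_iff ht₁ hEq, sub_sub_cancel, Finsupp.single_apply] at h₁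
    rw [coeffAt_iff ht₂ hEq, sub_sub_cancel, Finsupp.single_apply] at h₂
    split_ifs at h₁ h₂ <;> simp_all

end Admissible

section EdgeExtension

variable {L a b x : ℝ} {σ : ℤ} {d : ℝ →₀ ℤ}

noncomputable def edgeSlope (L a b : ℝ) (d : ℝ →₀ ℤ) : ℝ :=
  (b - a - d.sum fun u k => k * (L - u)) / L

noncomputable def kinkPoint (L r : ℝ) : ℝ :=
  (r - ⌈r⌉ + 1) * L

noncomputable def edgeExtension (L a b : ℝ) (d : ℝ →₀ ℤ) : ℝ → ℝ :=
  pwl a ⌈edgeSlope L a b d⌉ (d - Finsupp.single (kinkPoint L (edgeSlope L a b d)) 1)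

lemma kinkPoint_mem (hL : 0 < L) (r : ℝ) : kinkPoint L r ∈ Ioc 0 L :=
  ⟨mul_pos (by linarith [Int.ceil_lt_add_one r]) hL, by
    rw [kinkPoint]; nlinarith [Int.le_ceil r]⟩

lemma ceil_eq_and_kinkPoint_eq {r : ℝ} (hL : 0 < L) (hx : x ∈ Ioc 0 L)
    (h : r * L = σ * L - (L - x)) : ⌈r⌉ = σ ∧ kinkPoint L r = x := by
  have hσ : ⌈r⌉ = σ := by
    refine Int.ceil_eq_iff.2 ⟨lt_of_mul_lt_mul_right ?_ hL.le, le_of_mul_le_mul_right ?_ hL⟩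
    · linarith [hx.1]
    · linarith [hx.2]
  refine ⟨hσ, ?_⟩
  rw [kinkPoint, hσ]
  linear_combination h

lemma pwl_sub_single_apply_len (hd : ∀ u ∈ d.support, u ≤ L) (hx : x ≤ L) :
    pwl a σ (d - Finsupp.single x 1) L =
      a + σ * L + (d.sum fun u k => k * (L - u)) - (L - x) := by
  rw [pwl_sub_single, pwl_of_support_le hd, max_eq_left (sub_nonneg.2 hx)]
  push_cast
  ring

lemma edgeExtension_zero (hL : 0 < L) (hd : ∀ u ∈ d.support, 0 ≤ u) :
    edgeExtension L a b d 0 = a := by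
  rw [edgeExtension, pwl_sub_single, pwl_zero hd,
    max_eq_right (by linarith [(kinkPoint_mem hL (edgeSlope L a b d)).1])]
  ring

lemma edgeExtension_len (hL : 0 < L) (hd : ∀ u ∈ d.support, u ≤ L) :
    edgeExtension L a b d L = b := by
  rw [edgeExtension, pwl_sub_single_apply_len hd (kinkPoint_mem hL _).2, kinkPoint, edgeSlope]
  field_simp
  ring

lemma pwl_sub_single_eq_edgeExtension (hL : 0 < L) (hd : ∀ u ∈ d.support, u ≤ L)
    (hx : x ∈ Ioc 0 L) (hb : pwl a σ (d - Finsupp.single x 1) L = b) :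
    pwl a σ (d - Finsupp.single x 1) = edgeExtension L a b d := by
  rw [pwl_sub_single_apply_len hd hx.2] at hb
  obtain ⟨hσ, hkink⟩ := ceil_eq_and_kinkPoint_eq (r := edgeSlope L a b d) hL hx (by
    rw [edgeSlope, div_mul_cancel₀ _ hL.ne', ← hb]
    ring)
  rw [edgeExtension, hσ, hkink]

end EdgeExtension

/-- For every divisor `D` on `Γ` and every `f : V → ℝ` there is a unique rational
function `f̂` on `Γ` extending `f` such that `D + div(f̂)` is `G`-admissible.
(Uniqueness is up to the values on the points of `Γ`, i.e. on `[0, ℓ e]` for each edge.) -/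
theorem admissible_extension_exists_unique
    (Γ : MetricGraph) (D : Divisor Γ) (f : Γ.V → ℝ) :
    ∃ fhat : RatFn Γ, fhat.vtx = f ∧ AdmissibleSum D fhat ∧
      ∀ g : RatFn Γ, g.vtx = f → AdmissibleSum D g →
        ∀ e, ∀ t ∈ Set.Icc 0 (Γ.len e), g.edge e t = fhat.edge e t := by
  have hsupp (e) : ∀ u ∈ (D.edgeFinsupp e).support, u ∈ Ioo 0 (Γ.len e) :=
    fun _ => D.mem_Ioo_of_mem_support_edgeFinsupp
  let fhat : RatFn Γ :=
    { vtx := f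
      edge := fun e => edgeExtension (Γ.len e) (f (Γ.src e)) (f (Γ.tgt e)) (D.edgeFinsupp e)
      edge_src := fun e => edgeExtension_zero (Γ.len_pos e) fun u hu => (hsupp e u hu).1.le
      edge_tgt := fun e => edgeExtension_len (Γ.len_pos e) fun u hu => (hsupp e u hu).2.le
      pw := fun e => pwAffineZ_pwl (Γ.len_pos e) }
  refine ⟨fhat, rfl, admissibleSum_iff.2 fun e =>
    ⟨_, _, kinkPoint_mem (Γ.len_pos e) _, eqOn_refl _ _⟩, ?_⟩
  intro g hg hadm e t ht
  obtain ⟨σ, x, hx, hEq⟩ := admissibleSum_iff.1 hadm e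
  rw [hg] at hEq
  have hb := (hEq ⟨(Γ.len_pos e).le, le_rfl⟩).symm
  rw [g.edge_tgt, hg] at hb
  rw [hEq ht, pwl_sub_single_eq_edgeExtension (Γ.len_pos e)
    (fun u hu => (hsupp e u hu).2.le) hx hb]
end
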